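/- arXiv:1308.4437 — 2 statements merged into one kernel-verified Lean document; each statement's English description precedes it below -/
import Mathlib

section
/- For every integer k ≥ 2, every n ∈ ℕ^ℕ, and every ε > 0, there are infinitely many r ∈ ℕ such that the Hausdorff distance between F_{n,r} and the nested intersection ⋂_{s≥0} A_{n,s} (which equals Φ^{-1}(n)) is less than ε. -/
open Filter Topology
open scoped Classical

namespace BetaDF

/-- Digit sequences (elements of `Σ = {0,…,k−1}^ℕ` when all entries are `< k`). -/
abbrev Seq : Type := ℕ → ℕ

/-- Lexicographic (strict) order on digit sequences. -/
def seqLt (v w : Seq) : Prop := ∃ r, (∀ s, s < r → v s = w s) ∧ v r < w r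

/-- Lexicographic order on digit sequences. -/
def seqLe (v w : Seq) : Prop := seqLt v w ∨ v = w

/-- The shift map `σ`. -/
def shift (w : Seq) : Seq := fun r => w (r + 1)

/-- Membership in `Σ = {0,…,k−1}^ℕ`. -/
def InSigma (k : ℕ) (w : Seq) : Prop := ∀ r, w r < k

/-- A sequence is maximal if it is `≥` every element of its shift orbit. -/
def IsMaximal (w : Seq) : Prop := ∀ r, seqLe (shift^[r] w) w

/-- Number of occurrences of the digit `i` among the first `r` entries of `w`. -/
def digitCount (w : Seq) (i r : ℕ) : ℕ := ((Finset.range r).filter fun s => w s = i).card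

/-- The ambient Euclidean space `ℝ^k`. -/
abbrev E (k : ℕ) : Type := EuclideanSpace ℝ (Fin k)

/-- The `i`-th coordinate (with junk value `0` for `i ≥ k`). -/
def proj {k : ℕ} (α : E k) (i : ℕ) : ℝ := if h : i < k then α ⟨i, h⟩ else 0

/-- `w` has digit frequency vector `α`. -/
def HasDigitFreq (k : ℕ) (w : Seq) (α : E k) : Prop :=
  ∀ i, i < k →
    Tendsto (fun r => (digitCount w i r : ℝ) / (r : ℝ)) atTop (𝓝 (proj α i))

/-- The standard `(k−1)`-simplex `Δ`. -/
def simplex (k : ℕ) : Set (E k) := {α | (∀ i : Fin k, 0 ≤ α i) ∧ ∑ i, α i = 1}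

/-- The face `F = {α ∈ Δ : α_{k−1} = 0}`. -/
def faceF (k : ℕ) : Set (E k) := {α ∈ simplex k | proj α (k - 1) = 0}

/-- `Δ' = Δ ∖ F`. -/
def simplex' (k : ℕ) : Set (E k) := simplex k \ faceF k

/-- `J(α) = ⌊α₀/α_{k−1}⌋`. -/
noncomputable def Jfun {k : ℕ} (α : E k) : ℕ := ⌊proj α 0 / proj α (k - 1)⌋₊

/-- The map `K_n`. -/
noncomputable def Kmap {k : ℕ} (n : ℕ) (α : E k) : E k :=
  (WithLp.equiv 2 (Fin k → ℝ)).symm fun i =>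
    if (i : ℕ) + 2 < k then proj α ((i : ℕ) + 1) / (1 - proj α 0)
    else if (i : ℕ) + 2 = k then (proj α 0 - n * proj α (k - 1)) / (1 - proj α 0)
    else ((n + 1) * proj α (k - 1) - proj α 0) / (1 - proj α 0)

/-- The continued-fraction map `K : Δ' → Δ'`, `K(α) = K_{J(α)}(α)`. -/
noncomputable def Kstep {k : ℕ} (α : E k) : E k := Kmap (Jfun α) α

/-- The itinerary map `Φ(α)_r = J(K^r(α))`. -/
noncomputable def Phi {k : ℕ} (α : E k) : ℕ → ℕ := fun r => Jfun (Kstep^[r] α)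

/-- The projective embedding `K_n^{-1} : Δ → Δ`. -/
noncomputable def Kinv {k : ℕ} (n : ℕ) (α : E k) : E k :=
  (WithLp.equiv 2 (Fin k → ℝ)).symm fun i =>
    (if (i : ℕ) = 0 then (n + 1) * proj α (k - 2) + n * proj α (k - 1)
      else if (i : ℕ) + 1 = k then proj α (k - 2) + proj α (k - 1)
      else proj α ((i : ℕ) - 1)) /
      ((n + 1) * proj α (k - 2) + n * proj α (k - 1) + 1)

/-- `Υ_{n,r} = K_{n₀}^{-1} ∘ ⋯ ∘ K_{n_r}^{-1}`. -/
noncomputable def Ups {k : ℕ} (n : ℕ → ℕ) : ℕ → E k → E k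
  | 0 => Kinv (n 0)
  | r + 1 => fun α => Ups n r (Kinv (n (r + 1)) α)

/-- `A_{n,r} = Υ_{n,r}(Δ)`. -/
noncomputable def Anr (k : ℕ) (n : ℕ → ℕ) (r : ℕ) : Set (E k) := Ups n r '' simplex k

/-- `F_{n,r} = Υ_{n,r}(F)`. -/
noncomputable def Fnr (k : ℕ) (n : ℕ → ℕ) (r : ℕ) : Set (E k) := Ups n r '' faceF k

/-- Reverse-lexicographic strict order on `ℕ^ℕ`: `a < b` iff `a` exceeds `b`
at the first index where they differ. -/
def revLexLt (a b : ℕ → ℕ) : Prop := ∃ r, (∀ s, s < r → a s = b s) ∧ b r < a r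

/-- The word to which the substitution `Λ_n` sends the digit `i`. -/
def lamWord (k n i : ℕ) : List ℕ :=
  if i + 2 < k then [i + 1]
  else if i + 2 = k then (k - 1) :: List.replicate (n + 1) 0
  else (k - 1) :: List.replicate n 0

/-- The substitution `Λ_n : Σ → Σ`. -/
def lamSub (k n : ℕ) (w : Seq) : Seq := fun m =>
  (((List.range (m + 1)).map fun r => lamWord k n (w r)).flatten).getD m 0

/-- `Λ_{n,r} = Λ_{n₀} ∘ ⋯ ∘ Λ_{n_r}`. -/
def lamChain (k : ℕ) (n : ℕ → ℕ) : ℕ → Seq → Seq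
  | 0 => lamSub k (n 0)
  | r + 1 => fun w => lamChain k n r (lamSub k (n (r + 1)) w)

/-- `Λ_{n₀} ∘ ⋯ ∘ Λ_{n_{R−1}}` for a finite list of indices. -/
def lamList (k : ℕ) : List ℕ → Seq → Seq
  | [], w => w
  | a :: t, w => lamSub k a (lamList k t w)

/-- The constant sequence `(k−1)(k−1)(k−1)…`. -/
def topSeq (k : ℕ) : Seq := fun _ => k - 1

/-- The sequence `(k−1)000…`. -/
def baseSeq (k : ℕ) : Seq := fun m => if m = 0 then k - 1 else 0

/-- `S(n) = lim_{r→∞} Λ_{n,r}((k−1)(k−1)(k−1)…)` (limit in the product topology). -/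
noncomputable def Sseq (k : ℕ) (n : ℕ → ℕ) : Seq :=
  limUnder atTop fun r => lamChain k n r (topSeq k)

/-- The compactified itinerary space `N`: sequences with values in `ℕ∞` such that
all entries from the first `∞` onwards equal `∞`.  Elements with no `∞` entry
correspond to `ℕ^ℕ`; the others are the finite type elements `n₀…n_{R−1}∞`. -/
def NN : Type := {m : ℕ → ℕ∞ // ∀ r, m r = ⊤ → m (r + 1) = ⊤}

/-- Reverse-lexicographic strict order on `N` (`∞` counts as larger than every natural). -/
def nnLt (m n : NN) : Prop := ∃ r, (∀ s, s < r → m.1 s = n.1 s) ∧ n.1 r < m.1 r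

/-- Reverse-lexicographic order on `N`. -/
def nnLe (m n : NN) : Prop := nnLt m n ∨ m = n

/-- The element of `N` determined by an element of `ℕ^ℕ`. -/
def toNN (g : ℕ → ℕ) : NN := ⟨fun r => (g r : ℕ∞), fun r h => absurd h (by simp)⟩

/-- The itinerary `n₀ … n_{R−1} (n_R + 1) 0 0 0 …` (of rational type). -/
def ratSeq (f : ℕ → ℕ) (R : ℕ) : ℕ → ℕ := fun r =>
  if r < R then f r else if r = R then f R + 1 else 0

/-- The finite type element `n₀ … n_{R−1} n_R ∞` of `N`. -/
def finNN (f : ℕ → ℕ) (R : ℕ) : NN :=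
  ⟨fun r => if r ≤ R then (f r : ℕ∞) else ⊤, by
    intro r h
    show (if r + 1 ≤ R then ((f (r + 1) : ℕ∞)) else ⊤) = ⊤
    have h' : (if r ≤ R then ((f r : ℕ∞)) else ⊤) = ⊤ := h
    by_cases h1 : r ≤ R
    · rw [if_pos h1] at h'
      exact absurd h' (by simp)
    · rw [if_neg (by omega : ¬ r + 1 ≤ R)]⟩

/-- The extension of `S` to `N`. -/
noncomputable def SN (k : ℕ) (m : NN) : Seq :=
  if h : ∃ R, m.1 R = ⊤ then
    lamList k ((List.range (Nat.find h)).map fun r => (m.1 r).toNat) (baseSeq k)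
  else Sseq k fun r => (m.1 r).toNat

/-- The metric `d(m,n) = 2^{−X(m,n)}` on `N`, where
`X(m,n) = r + min(m₀+⋯+m_r, n₀+⋯+n_r)` and `r` is the first index where `m,n` differ. -/
noncomputable def dN (m n : NN) : ℝ :=
  if h : m = n then 0
  else
    have hex : ∃ r, m.1 r ≠ n.1 r := by
      by_contra hc
      push_neg at hc
      exact h (Subtype.ext (funext hc))
    (2 : ℝ) ^ (-(((Nat.find hex : ℕ) : ℤ) +
      ((min (∑ s ∈ Finset.range (Nat.find hex + 1), m.1 s)
            (∑ s ∈ Finset.range (Nat.find hex + 1), n.1 s)).toNat : ℤ)))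

/-- The symbolic β-shift `X(w)`. -/
def Xset (k : ℕ) (w : Seq) : Set Seq :=
  {v | InSigma k v ∧ ∀ r, seqLe (shift^[r] v) w}

/-- The digit frequency set `DF(w)` of the symbolic β-shift `X(w)`. -/
def DFw (k : ℕ) (w : Seq) : Set (E k) :=
  {α | α ∈ simplex k ∧ ∃ v ∈ Xset k w, HasDigitFreq k v α}

/-- `DF(n) = DF(S(n))` for `n ∈ ℕ^ℕ`. -/
noncomputable def DFn (k : ℕ) (n : ℕ → ℕ) : Set (E k) := DFw k (Sseq k n)

/-- `DF(n) = DF(S(n))` for `n ∈ N`. -/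
noncomputable def DFN (k : ℕ) (m : NN) : Set (E k) := DFw k (SN k m)

/-- The infimax map `I = S ∘ Φ` on `Δ'`, extended by `I(α) = (k−1)000…` on `F`. -/
noncomputable def Ifun (k : ℕ) (α : E k) : Seq :=
  if α ∈ simplex' k then Sseq k (Phi α) else baseSeq k

/-- The simplex `T_m = {α ∈ Δ : (m+1)α_{k−1} ≤ α₀}`. -/
def Tset (k m : ℕ) : Set (E k) :=
  {α ∈ simplex k | ((m : ℝ) + 1) * proj α (k - 1) ≤ proj α 0}

/-- The standard basis vector `e_i`. -/
noncomputable def evec (k i : ℕ) : E k :=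
  (WithLp.equiv 2 (Fin k → ℝ)).symm fun j => if (j : ℕ) = i then 1 else 0

/-- The rational extreme points
`FE(n) = {Υ_{n,s}(e_{k−2}) : n_{s+t} ≠ 0 for some 1 ≤ t ≤ k−2}`. -/
noncomputable def FEset (k : ℕ) (n : ℕ → ℕ) : Set (E k) :=
  {α | ∃ s, (∃ t, 1 ≤ t ∧ t ≤ k - 2 ∧ n (s + t) ≠ 0) ∧ α = Ups n s (evec k (k - 2))}

/-- The set `E(n)` of non-trivial extreme points of `DF(n)`:
extreme points other than `e₀,…,e_{k−2}`. -/
noncomputable def Eset (k : ℕ) (n : ℕ → ℕ) : Set (E k) :=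
  Set.extremePoints ℝ (DFn k n) \ {α | ∃ i, i ≤ k - 2 ∧ α = evec k i}

/-- The fiber `Φ^{-1}(n) ⊆ Δ'`. -/
noncomputable def PhiFiber (k : ℕ) (n : ℕ → ℕ) : Set (E k) :=
  {α ∈ simplex' k | Phi α = n}

/-- `f_β(x) = βx mod 1`. -/
noncomputable def fbeta (β x : ℝ) : ℝ := Int.fract (β * x)

/-- The digit sequence of the greedy β-expansion of `x`: `d_β(x)_r = ⌊β f_β^r(x)⌋`. -/
noncomputable def dbeta (β : ℝ) (x : ℝ) : Seq := fun r => ⌊β * (fbeta β)^[r] x⌋₊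

/-- The digit frequency set `DF(β)` of β-expansions of points of `[0,1]`. -/
noncomputable def DFbeta (k : ℕ) (β : ℝ) : Set (E k) :=
  {α | α ∈ simplex k ∧ ∃ x ∈ Set.Icc (0 : ℝ) 1, HasDigitFreq k (dbeta β x) α}

/-- The sequence `w_β`: if `d_β(1) = d₁…d_{r−1}d_r000…` with `d_r > 0` then `w_β`
is the infinite repetition of `d₁…d_{r−1}(d_r − 1)`; otherwise `w_β = d_β(1)`. -/
noncomputable def wbeta (β : ℝ) : Seq :=
  if h : ∃ r, dbeta β 1 r ≠ 0 ∧ ∀ s, r < s → dbeta β 1 s = 0 then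
    fun m =>
      if m % (Nat.find h + 1) = Nat.find h then dbeta β 1 (Nat.find h) - 1
      else dbeta β 1 (m % (Nat.find h + 1))
  else dbeta β 1

/-- `DF` extended to `[k−1,k]` by `DF(k−1) = F` and `DF(k) = Δ`. -/
noncomputable def DFext (k : ℕ) (β : ℝ) : Set (E k) :=
  if β ≤ (k : ℝ) - 1 then faceF k
  else if (k : ℝ) ≤ β then simplex k
  else DFbeta k β

/-- The mode-locking interval `I_{n₀…n_R}` determined by the word `f 0, …, f R`. -/
noncomputable def Iint (k : ℕ) (f : ℕ → ℕ) (R : ℕ) : Set ℝ :=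
  {β | (k : ℝ) - 1 < β ∧ β < k ∧
    seqLe (Sseq k (ratSeq f R)) (wbeta β) ∧ seqLe (wbeta β) (SN k (finNN f R))}

/-- The frequency vector of the first `s` digits of `w`. -/
noncomputable def freqVec (k : ℕ) (w : Seq) (s : ℕ) : E k :=
  (WithLp.equiv 2 (Fin k → ℝ)).symm fun i => (digitCount w (i : ℕ) s : ℝ) / (s : ℝ)

/-!
Write `k = K + 2`. The map `Υ_{n,r}` is the projective action of a product `B_r` of nonnegative
matrices, so `A_{n,r}` is the simplex spanned by the normalised columns of `B_r` and `F_{n,r}` is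
its facet opposite the last one. As the `A_{n,r}` are compact and decreasing, `F_{n,r}` is
eventually close to `⋂ A_{n,s}`. Conversely, each point of `A_{n,r}` lies within the distance of
the last two vertices (the `width`) from `F_{n,r}`, and each point of `A_{n,r+1}` within
`2σ / (n_{r+1} τ + σ)` (twice the `gap`), where `τ` and `σ` are the first and last column sums
of `B_r`. If both bounds stayed above `δ`, then either the digits are eventually zero, and the
first vertex converges to the last one, or the digits are bounded, infinitely often nonzero, and
all column sums stay comparable to `σ`; then every `K + 2` steps each vertex puts a fixed positive
weight on the previous last vertex, so the vertex simplex shrinks geometrically. Either way the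
width becomes small.
-/

open Finset

section Coordinates

noncomputable def toE (k : ℕ) (f : ℕ → ℝ) : E k :=
  (WithLp.equiv 2 (Fin k → ℝ)).symm fun i => f i

variable {k : ℕ}

@[simp] lemma toE_apply (f : ℕ → ℝ) (i : Fin k) : toE k f i = f i := rfl

lemma proj_toE (f : ℕ → ℝ) {i : ℕ} (hi : i < k) : proj (toE k f) i = f i := by
  simp [proj, hi]

@[simp] lemma proj_fin (α : E k) (i : Fin k) : proj α i = α i := by
  simp [proj]

lemma toE_congr {f g : ℕ → ℝ} (h : ∀ i < k, f i = g i) : toE k f = toE k g := by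
  ext i
  exact h i i.isLt

lemma toE_add (f g : ℕ → ℝ) : toE k f + toE k g = toE k (f + g) := rfl

lemma toE_smul (t : ℝ) (f : ℕ → ℝ) : t • toE k f = toE k (t • f) := rfl

lemma toE_sum (s : Finset ℕ) (g : ℕ → ℕ → ℝ) :
    ∑ u ∈ s, toE k (g u) = toE k (∑ u ∈ s, g u) := by
  ext i
  simp [toE]

lemma mem_simplex_iff (α : E k) :
    α ∈ simplex k ↔ (∀ i < k, 0 ≤ proj α i) ∧ ∑ i ∈ range k, proj α i = 1 := by
  rw [← Fin.sum_univ_eq_sum_range (fun i => proj α i), simplex]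
  simp only [proj_fin]
  exact and_congr_left' ⟨fun h i hi => by simpa [proj, hi] using h ⟨i, hi⟩,
    fun h i => by simpa using h i i.isLt⟩

lemma toE_mem_simplex {f : ℕ → ℝ} (hf : ∀ i, 0 ≤ f i) (hs : ∑ i ∈ range k, f i = 1) :
    toE k f ∈ simplex k := by
  rw [mem_simplex_iff]
  refine ⟨fun i hi => by rw [proj_toE f hi]; exact hf i, ?_⟩
  rw [← hs]
  exact sum_congr rfl fun i hi => proj_toE f (mem_range.1 hi)

lemma proj_nonneg {α : E k} (hα : α ∈ simplex k) (i : ℕ) : 0 ≤ proj α i := by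
  by_cases h : i < k
  · exact ((mem_simplex_iff α).1 hα).1 i h
  · simp [proj, h]

lemma simplex_eq_image_stdSimplex : simplex k = WithLp.toLp 2 '' stdSimplex ℝ (Fin k) := by
  ext α
  exact ⟨fun h => ⟨WithLp.ofLp α, h, rfl⟩, by rintro ⟨x, hx, rfl⟩; exact hx⟩

lemma isCompact_simplex : IsCompact (simplex k) := by
  rw [simplex_eq_image_stdSimplex]
  exact (isCompact_stdSimplex ℝ (Fin k)).image (PiLp.continuous_toLp 2 _)

lemma norm_le_one_of_mem_simplex {α : E k} (hα : α ∈ simplex k) : ‖α‖ ≤ 1 := by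
  rw [EuclideanSpace.norm_eq, Real.sqrt_le_one]
  calc ∑ i, ‖α i‖ ^ 2 ≤ ∑ i, α i := by
        refine sum_le_sum fun i _ => ?_
        have hle : α i ≤ 1 := hα.2 ▸ single_le_sum (fun j _ => hα.1 j) (mem_univ i)
        rw [Real.norm_of_nonneg (hα.1 i)]
        nlinarith [hα.1 i]
    _ = 1 := hα.2

lemma dist_le_two_of_mem_simplex {α β : E k} (hα : α ∈ simplex k) (hβ : β ∈ simplex k) :
    dist α β ≤ 2 := by
  linarith [dist_le_norm_add_norm α β, norm_le_one_of_mem_simplex hα,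
    norm_le_one_of_mem_simplex hβ]

end Coordinates

section Convexity

lemma exists_eq_smul_add_smul_mem_convexHull {ι V : Type*} [AddCommGroup V] [Module ℝ V]
    {s : Finset ι} {w : ι → ℝ} {v : ι → V} {i : ι} {c : ℝ} (hw : ∀ j ∈ s, 0 ≤ w j)
    (hsum : ∑ j ∈ s, w j = 1) (hi : i ∈ s) (hc : c ≤ w i) (hc1 : c < 1) :
    ∃ x ∈ convexHull ℝ (v '' s), ∑ j ∈ s, w j • v j = c • v i + (1 - c) • x := by
  have hc1' : (1 - c) ≠ 0 := by linarith
  set w' : ι → ℝ := fun j => (w j - if j = i then c else 0) / (1 - c)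
  have hw' : ∀ j ∈ s, 0 ≤ w' j := fun j hj => by
    refine div_nonneg ?_ (by linarith)
    split_ifs with h
    · rw [h]; linarith
    · linarith [hw j hj]
  have hsum' : ∑ j ∈ s, w' j = 1 := by
    simp only [w', ← sum_div, sum_sub_distrib, sum_ite_eq', hi, if_true, hsum]
    exact div_self hc1'
  refine ⟨∑ j ∈ s, w' j • v j, (convex_convexHull ℝ _).sum_mem hw' hsum'
    fun j hj => subset_convexHull ℝ _ (Set.mem_image_of_mem v hj), ?_⟩
  simp only [w', smul_sum, smul_smul, mul_div_cancel₀ _ hc1', sub_smul, ite_smul, zero_smul,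
    sum_sub_distrib, sum_ite_eq', hi, if_true]
  abel

lemma dist_le_of_mem_convexHull {V : Type*} [SeminormedAddCommGroup V] [NormedSpace ℝ V]
    {S : Set V} {d : ℝ} (hd : ∀ a ∈ S, ∀ b ∈ S, dist a b ≤ d) {x y : V}
    (hx : x ∈ convexHull ℝ S) (hy : y ∈ convexHull ℝ S) : dist x y ≤ d := by
  have hy' : ∀ a ∈ S, dist a y ≤ d := fun a ha => by
    rw [dist_comm]
    exact convexHull_min (fun b hb => Metric.mem_closedBall.2 (hd b hb a ha))
      (convex_closedBall a d) hy
  exact convexHull_min (fun a ha => Metric.mem_closedBall.2 (hy' a ha)) (convex_closedBall y d) hx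

end Convexity

section Columns

variable (K : ℕ)

def idCols (j i : ℕ) : ℝ := if i = j then 1 else 0

def colStep (m : ℕ) (c : ℕ → ℕ → ℝ) (j : ℕ) : ℕ → ℝ :=
  if j < K then c (j + 1)
  else if j = K then ((m : ℝ) + 1) • c 0 + c (K + 1)
  else (m : ℝ) • c 0 + c (K + 1)

variable (n : ℕ → ℕ)

/-- With `k = K + 2`, `Υ_{n,r}` is the projective action of `B_r = M_{n₀} ⋯ M_{n_r}`, where
`M_m e_j = e_{j+1}` for `j < K`, `M_m e_K = (m + 1) e₀ + e_{K+1}` and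
`M_m e_{K+1} = m e₀ + e_{K+1}`. `cols K n r j` is the `j`-th column of `B_r`; `colStep`
multiplies by `M_m` on the right. -/
def cols : ℕ → ℕ → ℕ → ℝ
  | 0 => colStep K (n 0) idCols
  | r + 1 => colStep K (n (r + 1)) (cols r)

def colSum (r j : ℕ) : ℝ := ∑ i ∈ range (K + 2), cols K n r j i

variable {K n} {r t j : ℕ}

lemma colStep_nonneg (m : ℕ) {c : ℕ → ℕ → ℝ} (hc : ∀ j i, 0 ≤ c j i) (j i : ℕ) :
    0 ≤ colStep K m c j i := by
  unfold colStep
  split_ifs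
  · exact hc _ _
  all_goals exact add_nonneg (mul_nonneg (by positivity) (hc 0 i)) (hc _ i)

lemma one_le_sum_colStep (m : ℕ) {c : ℕ → ℕ → ℝ} (hc0 : ∀ j i, 0 ≤ c j i)
    (hc : ∀ j < K + 2, 1 ≤ ∑ i ∈ range (K + 2), c j i) (j : ℕ) :
    1 ≤ ∑ i ∈ range (K + 2), colStep K m c j i := by
  have h0 : 0 ≤ ∑ i ∈ range (K + 2), c 0 i := sum_nonneg fun i _ => hc0 0 i
  have hm : (0 : ℝ) ≤ m := m.cast_nonneg
  unfold colStep
  split_ifs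
  · exact hc _ (by omega)
  all_goals
    simp only [Pi.add_apply, Pi.smul_apply, smul_eq_mul, sum_add_distrib, ← mul_sum]
    nlinarith [hc (K + 1) (by omega)]

lemma cols_nonneg (r j i : ℕ) : 0 ≤ cols K n r j i := by
  induction r generalizing j i with
  | zero => exact colStep_nonneg _ (fun j i => by unfold idCols; split_ifs <;> norm_num) j i
  | succ r ih => exact colStep_nonneg _ ih j i

lemma one_le_colSum (r j : ℕ) : 1 ≤ colSum K n r j := by
  induction r generalizing j with
  | zero =>
    refine one_le_sum_colStep _ (fun j i => by unfold idCols; split_ifs <;> norm_num)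
      (fun j hj => ?_) j
    simp [idCols, hj]
  | succ r ih => exact one_le_sum_colStep _ (cols_nonneg r) (fun j _ => ih j) j

lemma colSum_pos (r j : ℕ) : 0 < colSum K n r j :=
  one_pos.trans_le (one_le_colSum r j)

lemma colStep_of_lt (m : ℕ) (c : ℕ → ℕ → ℝ) (hj : j < K) :
    colStep K m c j = c (j + 1) := by
  simp [colStep, hj]

lemma colStep_self (m : ℕ) (c : ℕ → ℕ → ℝ) :
    colStep K m c K = ((m : ℝ) + 1) • c 0 + c (K + 1) := by
  simp [colStep]

lemma colStep_last (m : ℕ) (c : ℕ → ℕ → ℝ) :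
    colStep K m c (K + 1) = (m : ℝ) • c 0 + c (K + 1) := by
  simp [colStep]

lemma cols_succ_of_lt (hj : j < K) : cols K n (r + 1) j = cols K n r (j + 1) :=
  colStep_of_lt _ _ hj

lemma cols_succ_self :
    cols K n (r + 1) K = ((n (r + 1) : ℝ) + 1) • cols K n r 0 + cols K n r (K + 1) :=
  colStep_self _ _

lemma cols_succ_last :
    cols K n (r + 1) (K + 1) = (n (r + 1) : ℝ) • cols K n r 0 + cols K n r (K + 1) :=
  colStep_last _ _

lemma cols_add_of_le (hj : j ≤ K) : cols K n (t + j) 0 = cols K n t j := by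
  induction j generalizing t with
  | zero => rfl
  | succ j ih => rw [← add_assoc, add_right_comm, ih (by omega), cols_succ_of_lt (by omega)]

lemma cols_add_succ :
    cols K n (t + (K + 1)) 0 = ((n (t + 1) : ℝ) + 1) • cols K n t 0 + cols K n t (K + 1) := by
  rw [← add_assoc, add_right_comm, cols_add_of_le le_rfl, cols_succ_self]

lemma colSum_succ_of_lt (hj : j < K) : colSum K n (r + 1) j = colSum K n r (j + 1) := by
  simp [colSum, cols_succ_of_lt hj]

lemma colSum_succ_last :
    colSum K n (r + 1) (K + 1) = n (r + 1) * colSum K n r 0 + colSum K n r (K + 1) := by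
  simp [colSum, cols_succ_last, sum_add_distrib, mul_sum]

lemma colSum_succ_self :
    colSum K n (r + 1) K = (n (r + 1) + 1) * colSum K n r 0 + colSum K n r (K + 1) := by
  simp [colSum, cols_succ_self, sum_add_distrib, mul_sum]

lemma colSum_add_of_le (hj : j ≤ K) : colSum K n (t + j) 0 = colSum K n t j := by
  simp [colSum, cols_add_of_le hj]

lemma colSum_add_succ :
    colSum K n (t + (K + 1)) 0 = (n (t + 1) + 1) * colSum K n t 0 + colSum K n t (K + 1) := by
  simp [colSum, cols_add_succ, sum_add_distrib, mul_sum]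

lemma colSum_last_mono {t t' : ℕ} (h : t ≤ t') :
    colSum K n t (K + 1) ≤ colSum K n t' (K + 1) := by
  induction t', h using Nat.le_induction with
  | base => exact le_rfl
  | succ t' _ ih =>
    rw [colSum_succ_last]
    nlinarith [(colSum_pos (K := K) (n := n) t' 0).le, (n (t' + 1)).cast_nonneg (α := ℝ)]

end Columns

section Mix

variable (K : ℕ) (n : ℕ → ℕ)

/-- `M_m p`; normalised, this is `K_m⁻¹` (`proj_Kinv`). -/
def pushWeights (m : ℕ) (p : ℕ → ℝ) (u : ℕ) : ℝ :=
  if u = 0 then ((m : ℝ) + 1) * p K + m * p (K + 1)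
  else if u ≤ K then p (u - 1)
  else if u = K + 1 then p K + p (K + 1) else 0

def mixNum (p : ℕ → ℝ) (r i : ℕ) : ℝ := ∑ j ∈ range (K + 2), p j * cols K n r j i

def mixDen (p : ℕ → ℝ) (r : ℕ) : ℝ := ∑ j ∈ range (K + 2), p j * colSum K n r j

/-- The normalisation of `B_r p`; for `p = α ∈ Δ` this is `Υ_{n,r}(α)` (`Ups_eq_mix`). -/
noncomputable def mix (p : ℕ → ℝ) (r : ℕ) : E (K + 2) :=
  toE (K + 2) fun i => (mixDen K n p r)⁻¹ * mixNum K n p r i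

variable {K n} {m r : ℕ} {p : ℕ → ℝ}

lemma pushWeights_nonneg (hp : ∀ j, 0 ≤ p j) (u : ℕ) : 0 ≤ pushWeights K m p u := by
  unfold pushWeights
  have := hp K
  have := hp (K + 1)
  split_ifs <;> first | positivity | exact hp _

lemma pushWeights_zero : pushWeights K m p 0 = ((m : ℝ) + 1) * p K + m * p (K + 1) := by
  simp [pushWeights]

lemma pushWeights_succ {u : ℕ} (hu : u < K) : pushWeights K m p (u + 1) = p u := by
  simp [pushWeights, show u + 1 ≤ K by omega]

lemma pushWeights_last : pushWeights K m p (K + 1) = p K + p (K + 1) := by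
  simp [pushWeights]

lemma sum_pushWeights (m : ℕ) (p : ℕ → ℝ) :
    ∑ u ∈ range (K + 2), pushWeights K m p u =
      ∑ j ∈ range (K + 2), p j + ((m : ℝ) + 1) * p K + m * p (K + 1) := by
  rw [sum_range_succ, sum_range_succ', sum_congr rfl fun u hu => pushWeights_succ (mem_range.1 hu),
    pushWeights_zero, pushWeights_last, sum_range_succ, sum_range_succ]
  ring

lemma sum_mul_colStep (m : ℕ) (p : ℕ → ℝ) (c : ℕ → ℕ → ℝ) (i : ℕ) :
    ∑ j ∈ range (K + 2), p j * colStep K m c j i =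
      ∑ u ∈ range (K + 2), pushWeights K m p u * c u i := by
  have hmid : ∀ u ∈ range K,
      pushWeights K m p (u + 1) * c (u + 1) i = p u * colStep K m c u i := fun u hu => by
    rw [pushWeights_succ (mem_range.1 hu), colStep_of_lt m c (mem_range.1 hu)]
  conv_rhs => rw [sum_range_succ, sum_range_succ', sum_congr rfl hmid]
  conv_lhs => rw [sum_range_succ, sum_range_succ]
  simp only [pushWeights_zero, pushWeights_last, colStep_self, colStep_last, Pi.add_apply,
    Pi.smul_apply, smul_eq_mul]
  ring

lemma mixNum_zero (p : ℕ → ℝ) (i : ℕ) : mixNum K n p 0 i = pushWeights K (n 0) p i := by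
  rw [mixNum, cols, sum_mul_colStep]
  simp only [idCols, mul_ite, mul_one, mul_zero, sum_ite_eq, mem_range]
  split_ifs with hi
  · rfl
  · simp [pushWeights, show i ≠ 0 by omega, show ¬ i ≤ K by omega, show i ≠ K + 1 by omega]

lemma mixNum_succ (p : ℕ → ℝ) (r i : ℕ) :
    mixNum K n p (r + 1) i = mixNum K n (pushWeights K (n (r + 1)) p) r i :=
  sum_mul_colStep _ _ _ i

lemma mixDen_eq_sum_mixNum (p : ℕ → ℝ) (r : ℕ) :
    mixDen K n p r = ∑ i ∈ range (K + 2), mixNum K n p r i := by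
  simp only [mixDen, mixNum, colSum, mul_sum]
  exact sum_comm

lemma mixDen_succ (p : ℕ → ℝ) (r : ℕ) :
    mixDen K n p (r + 1) = mixDen K n (pushWeights K (n (r + 1)) p) r := by
  simp only [mixDen_eq_sum_mixNum, mixNum_succ]

lemma mix_succ (p : ℕ → ℝ) (r : ℕ) :
    mix K n p (r + 1) = mix K n (pushWeights K (n (r + 1)) p) r := by
  simp only [mix, mixDen_succ, mixNum_succ]

lemma mix_congr {q : ℕ → ℝ} (h : ∀ j < K + 2, p j = q j) (r : ℕ) :
    mix K n p r = mix K n q r := by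
  have hsum : ∀ f : ℕ → ℝ,
      ∑ j ∈ range (K + 2), p j * f j = ∑ j ∈ range (K + 2), q j * f j :=
    fun f => sum_congr rfl fun j hj => by rw [h j (mem_range.1 hj)]
  simp only [mix, mixDen, mixNum, hsum]

lemma mix_smul {c : ℝ} (hc : c ≠ 0) (p : ℕ → ℝ) (r : ℕ) :
    mix K n (c • p) r = mix K n p r := by
  refine toE_congr fun i _ => ?_
  simp only [mixDen, mixNum, Pi.smul_apply, smul_eq_mul, mul_assoc, ← mul_sum, mul_inv]
  field_simp

lemma proj_Kinv (m : ℕ) (α : E (K + 2)) (u : ℕ) :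
    proj (Kinv m α) u = (((m : ℝ) + 1) * proj α K + m * proj α (K + 1) + 1)⁻¹ *
      pushWeights K m (proj α) u := by
  by_cases hu : u < K + 2
  · simp only [proj, hu, dite_true, Kinv, pushWeights, show K + 2 - 2 = K by omega,
      show K + 2 - 1 = K + 1 by omega]
    simp only [WithLp.equiv_symm_apply, PiLp.toLp_apply]
    split_ifs <;> first | omega | ring
  · simp [proj, hu, pushWeights, show u ≠ 0 by omega, show ¬ u ≤ K by omega,
      show u ≠ K + 1 by omega]

lemma Kinv_den_pos {α : E (K + 2)} (hα : α ∈ simplex (K + 2)) (m : ℕ) :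
    0 < ((m : ℝ) + 1) * proj α K + m * proj α (K + 1) + 1 := by
  have := proj_nonneg hα K
  have := proj_nonneg hα (K + 1)
  positivity

lemma sum_pushWeights_proj {α : E (K + 2)} (hα : α ∈ simplex (K + 2)) (m : ℕ) :
    ∑ u ∈ range (K + 2), pushWeights K m (proj α) u =
      ((m : ℝ) + 1) * proj α K + m * proj α (K + 1) + 1 := by
  rw [sum_pushWeights, ((mem_simplex_iff α).1 hα).2]
  ring

lemma Kinv_mem_simplex {α : E (K + 2)} (hα : α ∈ simplex (K + 2)) (m : ℕ) :
    Kinv m α ∈ simplex (K + 2) := by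
  rw [mem_simplex_iff]
  simp only [proj_Kinv, ← mul_sum, sum_pushWeights_proj hα]
  exact ⟨fun i _ => mul_nonneg (inv_nonneg.2 (Kinv_den_pos hα m).le)
    (pushWeights_nonneg (proj_nonneg hα) i), inv_mul_cancel₀ (Kinv_den_pos hα m).ne'⟩

lemma Ups_eq_mix (r : ℕ) {α : E (K + 2)} (hα : α ∈ simplex (K + 2)) :
    Ups n r α = mix K n (proj α) r := by
  induction r generalizing α with
  | zero =>
    have hden : mixDen K n (proj α) 0 =
        ((n 0 : ℝ) + 1) * proj α K + n 0 * proj α (K + 1) + 1 := by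
      simp only [mixDen_eq_sum_mixNum, mixNum_zero, sum_pushWeights_proj hα]
    ext i
    change Kinv (n 0) α i = (mixDen K n (proj α) 0)⁻¹ * mixNum K n (proj α) 0 i
    rw [← proj_fin, proj_Kinv, mixNum_zero, hden]
  | succ r ih =>
    have hKinv : proj (Kinv (n (r + 1)) α) =
        (((n (r + 1) : ℝ) + 1) * proj α K + n (r + 1) * proj α (K + 1) + 1)⁻¹ •
          pushWeights K (n (r + 1)) (proj α) := funext (proj_Kinv _ α)
    change Ups n r (Kinv (n (r + 1)) α) = _
    rw [ih (Kinv_mem_simplex hα _), hKinv, mix_smul (inv_ne_zero (Kinv_den_pos hα _).ne'),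
      mix_succ]

end Mix

section Vertices

variable (K : ℕ) (n : ℕ → ℕ)

/-- `Υ_{n,r}(e_j)`. -/
noncomputable def vertex (r j : ℕ) : E (K + 2) := mix K n (idCols j) r

noncomputable def width (r : ℕ) : ℝ := dist (vertex K n r K) (vertex K n r (K + 1))

noncomputable def gap (r : ℕ) : ℝ :=
  colSum K n r (K + 1) / (n (r + 1) * colSum K n r 0 + colSum K n r (K + 1))

variable {K n} {r j : ℕ} {p : ℕ → ℝ}

lemma mixDen_idCols (hj : j < K + 2) : mixDen K n (idCols j) r = colSum K n r j := by
  simp [mixDen, idCols, hj]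

lemma vertex_eq (hj : j < K + 2) :
    vertex K n r j = (colSum K n r j)⁻¹ • toE (K + 2) (cols K n r j) := by
  rw [vertex, mix, toE_smul]
  refine toE_congr fun i _ => ?_
  simp [mixDen_idCols hj, mixNum, idCols, hj]

lemma sum_pos_of_mixDen_pos (hp : ∀ j, 0 ≤ p j) (hd : 0 < mixDen K n p r) :
    0 < ∑ j ∈ range (K + 2), p j := by
  refine (sum_nonneg fun j _ => hp j).lt_of_ne fun hs => hd.ne' ?_
  have hz := (sum_eq_zero_iff_of_nonneg fun j _ => hp j).1 hs.symm
  exact sum_eq_zero fun j hj => by rw [hz j hj, zero_mul]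

lemma single_le_mixDen (hp : ∀ j, 0 ≤ p j) (r : ℕ) (j : ℕ) (hj : j < K + 2) :
    p j * colSum K n r j ≤ mixDen K n p r :=
  single_le_sum (f := fun j => p j * colSum K n r j)
    (fun j _ => mul_nonneg (hp j) (colSum_pos r j).le) (mem_range.2 hj)

lemma add_le_mixDen (hp : ∀ j, 0 ≤ p j) (r : ℕ) :
    p K * colSum K n r K + p (K + 1) * colSum K n r (K + 1) ≤ mixDen K n p r := by
  rw [mixDen, sum_range_succ, sum_range_succ, add_assoc]
  exact le_add_of_nonneg_left (sum_nonneg fun j _ => mul_nonneg (hp j) (colSum_pos r j).le)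

lemma mixDen_pos (hp : ∀ j, 0 ≤ p j) (hs : 0 < ∑ j ∈ range (K + 2), p j) :
    0 < mixDen K n p r :=
  hs.trans_le (sum_le_sum fun j _ => le_mul_of_one_le_right (hp j) (one_le_colSum r j))

lemma mix_eq_sum_vertex (hd : mixDen K n p r ≠ 0) :
    mix K n p r =
      ∑ u ∈ range (K + 2), (p u * colSum K n r u / mixDen K n p r) • vertex K n r u := by
  have hterm : ∀ u ∈ range (K + 2), (p u * colSum K n r u / mixDen K n p r) • vertex K n r u =
      toE (K + 2) ((mixDen K n p r)⁻¹ • p u • cols K n r u) := fun u hu => by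
    rw [vertex_eq (mem_range.1 hu), smul_smul, toE_smul, smul_smul]
    congr 2
    field_simp [(colSum_pos r u).ne']
  rw [sum_congr rfl hterm, toE_sum]
  refine toE_congr fun i _ => ?_
  simp [mixNum, mul_sum]

lemma Ups_mem_simplex (r : ℕ) {α : E (K + 2)} (hα : α ∈ simplex (K + 2)) :
    Ups n r α ∈ simplex (K + 2) := by
  induction r generalizing α with
  | zero => exact Kinv_mem_simplex hα _
  | succ r ih => exact ih (Kinv_mem_simplex hα _)

lemma Anr_subset_simplex (r : ℕ) : Anr (K + 2) n r ⊆ simplex (K + 2) := by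
  rintro _ ⟨α, hα, rfl⟩
  exact Ups_mem_simplex r hα

lemma exists_Ups_eq_mix (hp : ∀ j, 0 ≤ p j) (hd : 0 < mixDen K n p r) :
    ∃ α ∈ simplex (K + 2), (p (K + 1) = 0 → proj α (K + 1) = 0) ∧
      Ups n r α = mix K n p r := by
  set S := ∑ j ∈ range (K + 2), p j
  have hS : 0 < S := sum_pos_of_mixDen_pos hp hd
  have hα : toE (K + 2) (S⁻¹ • p) ∈ simplex (K + 2) :=
    toE_mem_simplex (fun i => mul_nonneg (inv_nonneg.2 hS.le) (hp i))
      (by simp only [Pi.smul_apply, smul_eq_mul, ← mul_sum]; exact inv_mul_cancel₀ hS.ne')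
  refine ⟨_, hα, fun h => by simp [proj_toE _ (show K + 1 < K + 2 by omega), h], ?_⟩
  rw [Ups_eq_mix r hα, mix_congr (fun j hj => proj_toE _ hj), mix_smul (inv_ne_zero hS.ne')]

lemma mix_mem_Anr (hp : ∀ j, 0 ≤ p j) (hd : 0 < mixDen K n p r) :
    mix K n p r ∈ Anr (K + 2) n r := by
  obtain ⟨α, hα, -, he⟩ := exists_Ups_eq_mix hp hd
  exact ⟨α, hα, he⟩

lemma mix_mem_Fnr (hp : ∀ j, 0 ≤ p j) (hd : 0 < mixDen K n p r) (hlast : p (K + 1) = 0) :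
    mix K n p r ∈ Fnr (K + 2) n r := by
  obtain ⟨α, hα, hface, he⟩ := exists_Ups_eq_mix hp hd
  exact ⟨α, ⟨hα, hface hlast⟩, he⟩

lemma exists_mix_of_mem_Anr {x : E (K + 2)} (hx : x ∈ Anr (K + 2) n r) :
    ∃ p : ℕ → ℝ, (∀ j, 0 ≤ p j) ∧ ∑ j ∈ range (K + 2), p j = 1 ∧
      x = mix K n p r := by
  obtain ⟨α, hα, rfl⟩ := hx
  exact ⟨proj α, proj_nonneg hα, ((mem_simplex_iff α).1 hα).2, Ups_eq_mix r hα⟩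

lemma vertex_mem_Anr (r : ℕ) (hj : j < K + 2) : vertex K n r j ∈ Anr (K + 2) n r :=
  mix_mem_Anr (fun u => by unfold idCols; split_ifs <;> norm_num)
    (by rw [mixDen_idCols hj]; exact colSum_pos r j)

lemma vertex_mem_simplex (r : ℕ) (hj : j < K + 2) : vertex K n r j ∈ simplex (K + 2) :=
  Anr_subset_simplex r (vertex_mem_Anr r hj)

lemma width_le_two (r : ℕ) : width K n r ≤ 2 :=
  dist_le_two_of_mem_simplex (vertex_mem_simplex r (by omega)) (vertex_mem_simplex r (by omega))

end Vertices

section FaceProjection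

variable {K : ℕ} {n : ℕ → ℕ} {r : ℕ} {p : ℕ → ℝ}

lemma sum_smul_vertex_mem_Fnr {w : ℕ → ℝ} (hw : ∀ u, 0 ≤ w u)
    (hsum : ∑ u ∈ range (K + 2), w u = 1) (hlast : w (K + 1) = 0) :
    ∑ u ∈ range (K + 2), w u • vertex K n r u ∈ Fnr (K + 2) n r := by
  set q : ℕ → ℝ := fun u => w u / colSum K n r u
  have hqs : ∀ u, q u * colSum K n r u = w u := fun u => div_mul_cancel₀ _ (colSum_pos r u).ne'
  have hden : mixDen K n q r = 1 := by simp only [mixDen, hqs, hsum]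
  have hmem := mix_mem_Fnr (fun u => div_nonneg (hw u) (colSum_pos r u).le)
    (hden ▸ one_pos) (by simp [hlast])
  rwa [mix_eq_sum_vertex (by rw [hden]; exact one_ne_zero), hden,
    sum_congr rfl fun u _ => by rw [div_one, hqs]] at hmem

/-- Moving the weight of the last vertex onto vertex `K` gives a point of `F_{n,r}`. -/
lemma exists_mem_Fnr_dist_mix_eq (hp : ∀ j, 0 ≤ p j) (hd : 0 < mixDen K n p r) :
    ∃ y ∈ Fnr (K + 2) n r,
      dist (mix K n p r) y = p (K + 1) * colSum K n r (K + 1) / mixDen K n p r * width K n r := by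
  set w : ℕ → ℝ := fun u => p u * colSum K n r u / mixDen K n p r
  have hw : ∀ u, 0 ≤ w u := fun u => div_nonneg (mul_nonneg (hp u) (colSum_pos r u).le) hd.le
  have hsum : ∑ u ∈ range (K + 2), w u = 1 := by
    simp only [w, ← sum_div]
    exact div_self hd.ne'
  set w' : ℕ → ℝ := fun u => if u = K + 1 then 0 else if u = K then w K + w (K + 1) else w u
  have hw' : ∀ u, 0 ≤ w' u := fun u => by
    simp only [w']
    split_ifs
    exacts [le_rfl, add_nonneg (hw K) (hw (K + 1)), hw u]
  have hrest : ∀ u ∈ range K, w' u = w u := fun u hu => by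
    have hu : u < K := mem_range.1 hu
    simp only [w', if_neg (show u ≠ K + 1 by omega), if_neg (show u ≠ K by omega)]
  have hsum' : ∑ u ∈ range (K + 2), w' u = 1 := by
    rw [← hsum, sum_range_succ, sum_range_succ, sum_congr rfl hrest, sum_range_succ,
      sum_range_succ]
    simp only [w', if_true, if_neg (show K ≠ K + 1 by omega), add_zero]
    ring
  have hdiff : mix K n p r - ∑ u ∈ range (K + 2), w' u • vertex K n r u =
      w (K + 1) • (vertex K n r (K + 1) - vertex K n r K) := by
    rw [mix_eq_sum_vertex hd.ne', ← sum_sub_distrib, sum_range_succ, sum_range_succ,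
      sum_eq_zero fun u hu => by rw [hrest u hu]; exact sub_self _]
    simp only [w', w, if_true, if_neg (show K ≠ K + 1 by omega)]
    module
  refine ⟨_, sum_smul_vertex_mem_Fnr hw' hsum' (by simp [w']), ?_⟩
  rw [dist_eq_norm, hdiff, norm_smul, Real.norm_of_nonneg (hw _), ← dist_eq_norm, dist_comm,
    width]

lemma exists_mem_Fnr_dist_le_width {x : E (K + 2)} (hx : x ∈ Anr (K + 2) n r) :
    ∃ y ∈ Fnr (K + 2) n r, dist x y ≤ width K n r := by
  obtain ⟨p, hp, hs, rfl⟩ := exists_mix_of_mem_Anr hx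
  have hd : 0 < mixDen K n p r := mixDen_pos hp (hs ▸ one_pos)
  obtain ⟨y, hy, hdist⟩ := exists_mem_Fnr_dist_mix_eq hp hd
  refine ⟨y, hy, hdist.trans_le (mul_le_of_le_one_left dist_nonneg ?_)⟩
  rw [div_le_one hd]
  exact single_le_mixDen hp r (K + 1) (by omega)

lemma exists_mem_Fnr_dist_le_gap {x : E (K + 2)} (hx : x ∈ Anr (K + 2) n (r + 1)) :
    ∃ y ∈ Fnr (K + 2) n r, dist x y ≤ 2 * gap K n r := by
  obtain ⟨p, hp, hs, rfl⟩ := exists_mix_of_mem_Anr hx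
  set q := pushWeights K (n (r + 1)) p
  have hd : 0 < mixDen K n q r := by rw [← mixDen_succ]; exact mixDen_pos hp (hs ▸ one_pos)
  obtain ⟨y, hy, hdist⟩ := exists_mem_Fnr_dist_mix_eq (pushWeights_nonneg hp) hd
  refine ⟨y, hy, ?_⟩
  have hτ := colSum_pos (K := K) (n := n) r 0
  have hσ := colSum_pos (K := K) (n := n) r (K + 1)
  have hm : (0 : ℝ) ≤ n (r + 1) := Nat.cast_nonneg _
  have hq : q (K + 1) * (n (r + 1) * colSum K n r 0 + colSum K n r (K + 1)) ≤ mixDen K n q r := by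
    have := add_le_mixDen (K := K) (n := n) hp (r + 1)
    rw [colSum_succ_self, colSum_succ_last] at this
    rw [← mixDen_succ, show q (K + 1) = p K + p (K + 1) from pushWeights_last]
    nlinarith [hp K]
  have hweight : q (K + 1) * colSum K n r (K + 1) / mixDen K n q r ≤ gap K n r := by
    rw [gap, div_le_div_iff₀ hd (by positivity)]
    nlinarith
  rw [mix_succ, hdist, mul_comm 2]
  exact mul_le_mul hweight (width_le_two r) dist_nonneg (by unfold gap; positivity)

end FaceProjection

section Hausdorff

variable {K : ℕ} {n : ℕ → ℕ}

@[fun_prop] lemma continuous_proj {k : ℕ} (j : ℕ) : Continuous fun α : E k => proj α j := by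
  unfold proj
  split_ifs
  · fun_prop
  · fun_prop

lemma continuousOn_Ups (r : ℕ) : ContinuousOn (Ups n r) (simplex (K + 2)) := by
  refine ContinuousOn.congr ?_ fun α hα => Ups_eq_mix r hα
  refine (PiLp.continuous_toLp 2 _).comp_continuousOn (continuousOn_pi.2 fun i => ?_)
  have hden : Continuous fun α : E (K + 2) => mixDen K n (proj α) r := by
    unfold mixDen
    fun_prop
  have hnum : Continuous fun α : E (K + 2) => mixNum K n (proj α) r i := by
    unfold mixNum
    fun_prop
  exact (hden.continuousOn.inv₀ fun α hα => (mixDen_pos (proj_nonneg hα)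
    (by rw [((mem_simplex_iff α).1 hα).2]; exact one_pos)).ne').mul hnum.continuousOn

lemma isCompact_Anr (r : ℕ) : IsCompact (Anr (K + 2) n r) :=
  isCompact_simplex.image_of_continuousOn (continuousOn_Ups r)

lemma antitone_Anr : Antitone (Anr (K + 2) n) := by
  refine antitone_nat_of_succ_le fun r => ?_
  rintro _ ⟨α, hα, rfl⟩
  exact ⟨Kinv (n (r + 1)) α, Kinv_mem_simplex hα _, rfl⟩

lemma Fnr_subset_Anr (r : ℕ) : Fnr (K + 2) n r ⊆ Anr (K + 2) n r :=
  Set.image_mono fun _ hα => hα.1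

lemma exists_Anr_subset_thickening {η : ℝ} (hη : 0 < η) :
    ∃ r₀, Anr (K + 2) n r₀ ⊆ Metric.thickening η (⋂ s, Anr (K + 2) n s) :=
  exists_subset_nhds_of_isCompact antitone_Anr.directed_ge isCompact_Anr fun _ hx =>
    Metric.isOpen_thickening.mem_nhds (Metric.self_subset_thickening hη _ hx)

lemma eventually_hausdorffDist_le {η : ℝ} (hη : 0 < η) :
    ∃ R₀, ∀ r ≥ R₀, Metric.hausdorffDist (Fnr (K + 2) n r) (⋂ s, Anr (K + 2) n s) ≤
      max η (min (width K n r) (2 * gap K n r)) := by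
  obtain ⟨r₀, hr₀⟩ := exists_Anr_subset_thickening (n := n) hη
  refine ⟨r₀, fun r hr => Metric.hausdorffDist_le_of_mem_dist (le_max_of_le_left hη.le)
    (fun x hx => ?_) (fun a ha => ?_)⟩
  · obtain ⟨a, ha, hxa⟩ :=
      Metric.mem_thickening_iff.1 (hr₀ (antitone_Anr hr (Fnr_subset_Anr r hx)))
    exact ⟨a, ha, hxa.le.trans (le_max_left _ _)⟩
  · have haA : ∀ s, a ∈ Anr (K + 2) n s := Set.mem_iInter.1 ha
    rcases le_total (width K n r) (2 * gap K n r) with h | h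
    · obtain ⟨y, hy, hay⟩ := exists_mem_Fnr_dist_le_width (haA r)
      exact ⟨y, hy, hay.trans (by rw [min_eq_left h]; exact le_max_right _ _)⟩
    · obtain ⟨y, hy, hay⟩ := exists_mem_Fnr_dist_le_gap (haA (r + 1))
      exact ⟨y, hy, hay.trans (by rw [min_eq_right h]; exact le_max_right _ _)⟩

end Hausdorff

section WidthRecursion

variable {K : ℕ} {n : ℕ → ℕ} {r : ℕ}

lemma inv_smul_add_sub_inv_smul_add {k : ℕ} (a b : E k) {A B p p' : ℝ} (hA : A ≠ 0)
    (hB : B ≠ 0) (hD : p * A + B ≠ 0) (hD' : p' * A + B ≠ 0) :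
    (p * A + B)⁻¹ • (p • a + b) - (p' * A + B)⁻¹ • (p' • a + b) =
      ((p - p') * A * B / ((p * A + B) * (p' * A + B))) • (A⁻¹ • a - B⁻¹ • b) := by
  rw [mul_comm p, mul_comm p'] at *
  match_scalars <;> field_simp <;> ring

lemma vertex_succ_self : vertex K n (r + 1) K =
    ((n (r + 1) + 1) * colSum K n r 0 + colSum K n r (K + 1))⁻¹ •
      (((n (r + 1) : ℝ) + 1) • toE (K + 2) (cols K n r 0) +
        toE (K + 2) (cols K n r (K + 1))) := by
  rw [vertex_eq (by omega), colSum_succ_self, cols_succ_self]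
  rfl

lemma vertex_succ_last : vertex K n (r + 1) (K + 1) =
    (n (r + 1) * colSum K n r 0 + colSum K n r (K + 1))⁻¹ •
      ((n (r + 1) : ℝ) • toE (K + 2) (cols K n r 0) + toE (K + 2) (cols K n r (K + 1))) := by
  rw [vertex_eq (by omega), colSum_succ_last, cols_succ_last]
  rfl

lemma width_succ_le : width K n (r + 1) ≤
    colSum K n r 0 / (colSum K n r 0 + colSum K n r (K + 1)) *
      dist (vertex K n r 0) (vertex K n r (K + 1)) := by
  have hτ := colSum_pos (K := K) (n := n) r 0
  have hσ := colSum_pos (K := K) (n := n) r (K + 1)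
  have hm : (0 : ℝ) ≤ n (r + 1) := Nat.cast_nonneg _
  rw [width, vertex_succ_self, vertex_succ_last, dist_eq_norm,
    inv_smul_add_sub_inv_smul_add _ _ hτ.ne' hσ.ne' (by positivity) (by positivity),
    vertex_eq (by omega), vertex_eq (by omega), norm_smul, ← dist_eq_norm, add_sub_cancel_left,
    one_mul, Real.norm_of_nonneg (by positivity)]
  refine mul_le_mul_of_nonneg_right ?_ dist_nonneg
  rw [div_le_div_iff₀ (by positivity) (by positivity), mul_assoc]
  refine mul_le_mul_of_nonneg_left ?_ hτ.le
  nlinarith [mul_le_mul (show colSum K n r 0 + colSum K n r (K + 1) ≤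
      (n (r + 1) + 1) * colSum K n r 0 + colSum K n r (K + 1) by nlinarith)
    (show colSum K n r (K + 1) ≤ n (r + 1) * colSum K n r 0 + colSum K n r (K + 1) by nlinarith)
    hσ.le (by positivity)]

end WidthRecursion

section ZeroDigits

variable {K : ℕ} {n : ℕ → ℕ} {u : ℕ}

lemma cols_last_eq_of_digits_zero {w : ℕ} (huw : u ≤ w)
    (h0 : ∀ v, u ≤ v → v < w → n (v + 1) = 0) :
    cols K n w (K + 1) = cols K n u (K + 1) := by
  induction w, huw using Nat.le_induction with
  | base => rfl
  | succ w huw ih =>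
    rw [cols_succ_last, h0 w huw (by omega), ih fun v hv hvw => h0 v hv (by omega),
      Nat.cast_zero, zero_smul, zero_add]

lemma cols_zero_add_mul_of_digits_zero (j : ℕ)
    (h0 : ∀ v, u ≤ v → v < u + j * (K + 1) → n (v + 1) = 0) :
    cols K n (u + j * (K + 1)) 0 = cols K n u 0 + (j : ℝ) • cols K n u (K + 1) := by
  induction j with
  | zero => simp
  | succ j ih =>
    have h0' : ∀ v, u ≤ v → v < u + j * (K + 1) → n (v + 1) = 0 := fun v hv hvj =>
      h0 v hv (by nlinarith)
    rw [show u + (j + 1) * (K + 1) = u + j * (K + 1) + (K + 1) by ring, cols_add_succ,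
      h0 _ (by omega) (by nlinarith), ih h0', cols_last_eq_of_digits_zero (by omega) h0']
    push_cast
    module

lemma colSum_last_eq_of_digits_zero {w : ℕ} (huw : u ≤ w)
    (h0 : ∀ v, u ≤ v → v < w → n (v + 1) = 0) :
    colSum K n w (K + 1) = colSum K n u (K + 1) := by
  simp only [colSum, cols_last_eq_of_digits_zero huw h0]

lemma colSum_zero_add_mul_of_digits_zero (j : ℕ)
    (h0 : ∀ v, u ≤ v → v < u + j * (K + 1) → n (v + 1) = 0) :
    colSum K n (u + j * (K + 1)) 0 = colSum K n u 0 + j * colSum K n u (K + 1) := by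
  simp only [colSum, cols_zero_add_mul_of_digits_zero j h0, Pi.add_apply, Pi.smul_apply,
    smul_eq_mul, sum_add_distrib, mul_sum]

/-- Once the digits vanish, the last vertex stays fixed and the first one approaches it
like `1 / j`. -/
lemma dist_vertex_le_of_digits_zero (h0 : ∀ t ≥ u, n (t + 1) = 0) (j : ℕ) :
    dist (vertex K n (u + j * (K + 1)) 0) (vertex K n (u + j * (K + 1)) (K + 1)) ≤
      2 * colSum K n u 0 / (colSum K n u 0 + j * colSum K n u (K + 1)) := by
  have h0' : ∀ v, u ≤ v → v < u + j * (K + 1) → n (v + 1) = 0 := fun v hv _ => h0 v hv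
  have hA := (colSum_pos (K := K) (n := n) u 0).ne'
  have hB := (colSum_pos (K := K) (n := n) u (K + 1)).ne'
  have hAB : 0 < colSum K n u 0 + j * colSum K n u (K + 1) :=
    add_pos_of_pos_of_nonneg (colSum_pos _ _) (mul_nonneg j.cast_nonneg (colSum_pos _ _).le)
  have hdiff : vertex K n (u + j * (K + 1)) 0 - vertex K n (u + j * (K + 1)) (K + 1) =
      (colSum K n u 0 / (colSum K n u 0 + j * colSum K n u (K + 1))) •
        (vertex K n u 0 - vertex K n u (K + 1)) := by
    simp only [vertex_eq (show 0 < K + 2 by omega), vertex_eq (show K + 1 < K + 2 by omega),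
      colSum_zero_add_mul_of_digits_zero j h0', colSum_last_eq_of_digits_zero le_self_add h0',
      cols_zero_add_mul_of_digits_zero j h0', cols_last_eq_of_digits_zero le_self_add h0',
      ← toE_smul, ← toE_add]
    match_scalars
    · field_simp
    · field_simp
      ring
  have hcoef : 0 ≤ colSum K n u 0 / (colSum K n u 0 + j * colSum K n u (K + 1)) :=
    div_nonneg (colSum_pos _ _).le hAB.le
  rw [dist_eq_norm, hdiff, norm_smul, ← dist_eq_norm, Real.norm_of_nonneg hcoef, mul_comm,
    mul_div_assoc]
  exact mul_le_mul_of_nonneg_right (dist_le_two_of_mem_simplex (vertex_mem_simplex _ (by omega))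
    (vertex_mem_simplex _ (by omega))) hcoef

lemma exists_width_lt_of_digits_zero (h0 : ∀ t ≥ u, n (t + 1) = 0) {δ : ℝ} (hδ : 0 < δ)
    (R : ℕ) : ∃ r ≥ R, width K n r < δ := by
  set A := colSum K n u 0
  have hA : 0 < A := colSum_pos _ _
  have hB : 1 ≤ colSum K n u (K + 1) := one_le_colSum _ _
  obtain ⟨j, hj⟩ := exists_nat_gt (max (R : ℝ) (2 * A / δ))
  have hRj : R < j := by exact_mod_cast (le_max_left _ _).trans_lt hj
  have hjA : 2 * A < δ * j := (div_lt_iff₀' hδ).1 ((le_max_right _ _).trans_lt hj)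
  set t := u + j * (K + 1)
  have hjt : j ≤ t := (Nat.le_mul_of_pos_right j (by omega)).trans (Nat.le_add_left _ _)
  refine ⟨t + 1, by omega, ?_⟩
  have hτσ : colSum K n t 0 / (colSum K n t 0 + colSum K n t (K + 1)) ≤ 1 :=
    div_le_one_of_le₀ (le_add_of_nonneg_right (colSum_pos t _).le)
      (add_pos (colSum_pos t _) (colSum_pos t _)).le
  calc width K n (t + 1) ≤ dist (vertex K n t 0) (vertex K n t (K + 1)) :=
        width_succ_le.trans (mul_le_of_le_one_left dist_nonneg hτσ)
    _ ≤ 2 * A / (A + j * colSum K n u (K + 1)) := dist_vertex_le_of_digits_zero h0 j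
    _ < δ := by
        rw [div_lt_iff₀ (by positivity)]
        nlinarith

end ZeroDigits

section Balanced

variable {K : ℕ} {n : ℕ → ℕ}

variable (K n) in
structure Balanced (R : ℕ) (T M : ℝ) : Prop where
  one_le_factor : 1 ≤ T
  last_le : ∀ r ≥ R, colSum K n r (K + 1) ≤ T * colSum K n r 0
  first_le : ∀ r ≥ R, n (r + 1) ≠ 0 → colSum K n r 0 ≤ T * colSum K n r (K + 1)
  digit_le : ∀ r ≥ R, (n (r + 1) : ℝ) ≤ M

namespace Balanced

variable {R : ℕ} {T M : ℝ} (hB : Balanced K n R T M)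
include hB

lemma bound_nonneg : 0 ≤ M := (n (R + 1)).cast_nonneg.trans (hB.digit_le R le_rfl)

lemma factor_nonneg : 0 ≤ T := zero_le_one.trans hB.one_le_factor

/-- Between two nonzero digits `colSum r 0` grows by `colSum r (K + 1)` every `K + 1` steps,
so it would exceed `T * colSum r (K + 1)` if the gap were longer. -/
lemma exists_digit_ne_zero_near (hev : ∀ u, ∃ v ≥ u, n (v + 1) ≠ 0) {r : ℕ}
    (hr : R ≤ r) :
    ∃ e, r ≤ e ∧ e ≤ r + (⌈T⌉₊ + 1) * (K + 1) ∧ n (e + 1) ≠ 0 := by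
  have hex := hev r
  obtain ⟨hre, hne⟩ := Nat.find_spec hex
  refine ⟨Nat.find hex, hre, ?_, hne⟩
  by_contra! hfar
  set J := ⌈T⌉₊ + 1
  set u := Nat.find hex - J * (K + 1)
  have h0 : ∀ v, u ≤ v → v < u + J * (K + 1) → n (v + 1) = 0 := fun v hv hvu => by
    by_contra hv0
    exact Nat.find_min hex (show v < Nat.find hex by omega) ⟨by omega, hv0⟩
  have he : u + J * (K + 1) = Nat.find hex := by omega
  have hτ := colSum_zero_add_mul_of_digits_zero J h0
  have hσ := colSum_last_eq_of_digits_zero (K := K) (Nat.le_add_right u (J * (K + 1))) h0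
  rw [he] at hτ hσ
  have hfirst := hB.first_le _ (hr.trans hre) hne
  rw [hτ, hσ] at hfirst
  have hJ : T < J := by
    have := Nat.le_ceil T
    simp only [J]
    push_cast
    linarith
  nlinarith [colSum_pos (K := K) (n := n) u 0, one_le_colSum (K := K) (n := n) u (K + 1)]

lemma le_colSum_last_add (hev : ∀ u, ∃ v ≥ u, n (v + 1) ≠ 0) {u : ℕ} (hu : R ≤ u) :
    (T + 1) * colSum K n u (K + 1) ≤
      T * colSum K n (u + (⌈T⌉₊ + 1) * (K + 1) + 1) (K + 1) := by
  obtain ⟨e, hue, heu, hne⟩ := hB.exists_digit_ne_zero_near hev hu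
  have hm : (1 : ℝ) ≤ n (e + 1) := by exact_mod_cast Nat.one_le_iff_ne_zero.2 hne
  have hstep := colSum_succ_last (K := K) (n := n) (r := e)
  have hlast := hB.last_le e (hu.trans hue)
  have hmono₁ := colSum_last_mono (K := K) (n := n) hue
  have hmono₂ := colSum_last_mono (K := K) (n := n)
    (show e + 1 ≤ u + (⌈T⌉₊ + 1) * (K + 1) + 1 by omega)
  have hτ := colSum_pos (K := K) (n := n) e 0
  have hT : 0 ≤ T := hB.factor_nonneg
  calc (T + 1) * colSum K n u (K + 1) ≤ (T + 1) * colSum K n e (K + 1) :=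
        mul_le_mul_of_nonneg_left hmono₁ (by linarith)
    _ ≤ T * (colSum K n e 0 + colSum K n e (K + 1)) := by linarith
    _ ≤ T * colSum K n (e + 1) (K + 1) :=
        mul_le_mul_of_nonneg_left (by rw [hstep]; nlinarith) hT
    _ ≤ _ := mul_le_mul_of_nonneg_left hmono₂ hT

lemma colSum_zero_add_succ_le {u : ℕ} (hu : R ≤ u) :
    colSum K n (u + (K + 1)) 0 ≤ colSum K n u 0 + (M * T + 1) * colSum K n u (K + 1) := by
  rw [colSum_add_succ]
  have hσ := colSum_pos (K := K) (n := n) u (K + 1)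
  have hMT : 0 ≤ M * T := mul_nonneg hB.bound_nonneg hB.factor_nonneg
  by_cases hm : n (u + 1) = 0
  · simp only [hm, Nat.cast_zero, zero_add, one_mul]
    nlinarith
  · have hfirst := hB.first_le u hu hm
    have hdigit := hB.digit_le u hu
    have hτ := colSum_pos (K := K) (n := n) u 0
    have hnm : (0 : ℝ) ≤ n (u + 1) := Nat.cast_nonneg _
    nlinarith [mul_le_mul_of_nonneg_left hfirst hnm, mul_le_mul_of_nonneg_right hdigit
      (mul_nonneg hB.factor_nonneg hσ.le)]

lemma colSum_zero_add_mul_le {u : ℕ} (hu : R ≤ u) (j : ℕ) :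
    colSum K n (u + j * (K + 1)) 0 ≤
      colSum K n u 0 + j * (M * T + 1) * colSum K n (u + j * (K + 1)) (K + 1) := by
  induction j with
  | zero => simp
  | succ j ih =>
    have hstep := hB.colSum_zero_add_succ_le (show R ≤ u + j * (K + 1) by omega)
    have hmono := colSum_last_mono (K := K) (n := n)
      (show u + j * (K + 1) ≤ u + (j + 1) * (K + 1) by nlinarith)
    have hMT : 0 ≤ M * T + 1 := by
      nlinarith [mul_nonneg hB.bound_nonneg hB.factor_nonneg]
    rw [show u + (j + 1) * (K + 1) = u + j * (K + 1) + (K + 1) by ring] at hmono ⊢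
    push_cast
    nlinarith [mul_le_mul_of_nonneg_left hmono (mul_nonneg (j.cast_nonneg (α := ℝ)) hMT),
      mul_le_mul_of_nonneg_left hmono hMT]

/-- Over a window of length `W`, `colSum · (K + 1)` grows by the factor `(T + 1) / T` while
`colSum · 0` increases by at most a fixed multiple of `colSum · (K + 1)`; so their ratio
stays bounded. -/
lemma exists_colSum_zero_le (hev : ∀ u, ∃ v ≥ u, n (v + 1) ≠ 0) :
    ∃ C, 0 ≤ C ∧ ∀ t ≥ R, colSum K n t 0 ≤ C * colSum K n t (K + 1) := by
  set G := (⌈T⌉₊ + 1) * (K + 1)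
  set W := (G + 1) * (K + 1) with hW
  set C₀ := ∑ v ∈ range (R + W), colSum K n v 0
  set B := ((G + 1 : ℕ) : ℝ) * (M * T + 1)
  have hT : 0 ≤ T := hB.factor_nonneg
  have hC₀ : 0 ≤ C₀ := sum_nonneg fun v _ => (colSum_pos v 0).le
  have hB0 : 0 ≤ B := mul_nonneg (Nat.cast_nonneg _) (by nlinarith [hB.bound_nonneg])
  refine ⟨C₀ + (T + 1) * B, by positivity, fun t ht => ?_⟩
  induction t using Nat.strong_induction_on with
  | _ t ih =>
  have hσt := one_le_colSum (K := K) (n := n) t (K + 1)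
  by_cases hsmall : t < R + W
  · have h1 : colSum K n t 0 ≤ C₀ :=
      single_le_sum (f := fun v => colSum K n v 0) (fun v _ => (colSum_pos v 0).le)
        (mem_range.2 hsmall)
    nlinarith [mul_le_mul_of_nonneg_left hσt (show 0 ≤ C₀ + (T + 1) * B by positivity)]
  · obtain ⟨u, rfl⟩ : ∃ u, t = u + W := ⟨t - W, by omega⟩
    have hu : R ≤ u := by omega
    have hτ := hB.colSum_zero_add_mul_le hu (G + 1)
    rw [← hW] at hτ
    have hgrow := (hB.le_colSum_last_add hev hu).trans
      (mul_le_mul_of_nonneg_left (colSum_last_mono (show u + G + 1 ≤ u + W by nlinarith)) hT)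
    have hW0 : 0 < W := by rw [hW]; positivity
    have hIH := ih u (by omega) hu
    refine le_of_mul_le_mul_left ?_ (show 0 < T + 1 by linarith)
    calc (T + 1) * colSum K n (u + W) 0
        ≤ (T + 1) * ((C₀ + (T + 1) * B) * colSum K n u (K + 1) +
            B * colSum K n (u + W) (K + 1)) :=
          mul_le_mul_of_nonneg_left (by linarith) (by linarith)
      _ = (C₀ + (T + 1) * B) * ((T + 1) * colSum K n u (K + 1)) +
            (T + 1) * B * colSum K n (u + W) (K + 1) := by ring
      _ ≤ (C₀ + (T + 1) * B) * (T * colSum K n (u + W) (K + 1)) +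
            (T + 1) * B * colSum K n (u + W) (K + 1) :=
          add_le_add_left (mul_le_mul_of_nonneg_left hgrow (by positivity)) _
      _ ≤ (T + 1) * ((C₀ + (T + 1) * B) * colSum K n (u + W) (K + 1)) := by nlinarith

lemma exists_colSum_le (hev : ∀ u, ∃ v ≥ u, n (v + 1) ≠ 0) :
    ∃ C, 1 ≤ C ∧ ∀ t ≥ R, ∀ j < K + 2, colSum K n t j ≤ C * colSum K n t (K + 1) := by
  obtain ⟨C, hC0, hC⟩ := hB.exists_colSum_zero_le hev
  have hq : 1 ≤ M * C + 1 := by nlinarith [mul_nonneg hB.bound_nonneg hC0]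
  have hstep : ∀ u ≥ R, colSum K n (u + 1) (K + 1) ≤ (M * C + 1) * colSum K n u (K + 1) :=
    fun u hu => by
      have hσ := colSum_pos (K := K) (n := n) u (K + 1)
      rw [colSum_succ_last]
      nlinarith [mul_le_mul_of_nonneg_left (hC u hu) (n (u + 1)).cast_nonneg,
        mul_le_mul_of_nonneg_right (hB.digit_le u hu) (mul_nonneg hC0 hσ.le)]
  have hpow : ∀ t ≥ R, ∀ j,
      colSum K n (t + j) (K + 1) ≤ (M * C + 1) ^ j * colSum K n t (K + 1) := by
    intro t ht j
    induction j with
    | zero => simp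
    | succ j ih =>
      rw [← add_assoc, pow_succ, mul_comm _ (M * C + 1), mul_assoc]
      exact (hstep _ (by omega)).trans (mul_le_mul_of_nonneg_left ih (by linarith))
  have hCq : 0 ≤ C * (M * C + 1) ^ K := mul_nonneg hC0 (pow_nonneg (by linarith) K)
  refine ⟨C * (M * C + 1) ^ K + 1, by linarith, fun t ht j hj => ?_⟩
  have hσ := colSum_pos (K := K) (n := n) t (K + 1)
  rcases (show j ≤ K ∨ j = K + 1 by omega) with hj | rfl
  · rw [← colSum_add_of_le hj]
    calc colSum K n (t + j) 0 ≤ C * colSum K n (t + j) (K + 1) := hC _ (by omega)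
      _ ≤ C * ((M * C + 1) ^ K * colSum K n t (K + 1)) :=
          mul_le_mul_of_nonneg_left ((hpow t ht j).trans (mul_le_mul_of_nonneg_right
            (pow_le_pow_right₀ hq hj) hσ.le)) hC0
      _ ≤ (C * (M * C + 1) ^ K + 1) * colSum K n t (K + 1) := by nlinarith
  · nlinarith

end Balanced

end Balanced

section Contraction

variable {K : ℕ} {n : ℕ → ℕ} {t : ℕ} {M C : ℝ}

variable (K n) in
def pushWeightsIter (t : ℕ) : ℕ → (ℕ → ℝ) → ℕ → ℝ
  | 0, p => p
  | L + 1, p => pushWeightsIter t L (pushWeights K (n (t + L + 1)) p)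

lemma mix_add (L : ℕ) (p : ℕ → ℝ) :
    mix K n p (t + L) = mix K n (pushWeightsIter K n t L p) t := by
  induction L generalizing p with
  | zero => rfl
  | succ L ih => rw [← add_assoc, mix_succ, ih]; rfl

lemma mixDen_add (L : ℕ) (p : ℕ → ℝ) :
    mixDen K n p (t + L) = mixDen K n (pushWeightsIter K n t L p) t := by
  induction L generalizing p with
  | zero => rfl
  | succ L ih => rw [← add_assoc, mixDen_succ, ih]; rfl

lemma pushWeightsIter_nonneg (L : ℕ) {p : ℕ → ℝ} (hp : ∀ j, 0 ≤ p j) (u : ℕ) :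
    0 ≤ pushWeightsIter K n t L p u := by
  induction L generalizing p with
  | zero => exact hp u
  | succ L ih => exact ih (pushWeights_nonneg hp)

lemma one_le_pushWeightsIter_last {L a : ℕ} {p : ℕ → ℝ} (ha : a < K + 2)
    (hp : ∀ j, 0 ≤ p j) (hpa : 1 ≤ p a) (hL : K + 1 - a ≤ L) :
    1 ≤ pushWeightsIter K n t L p (K + 1) := by
  induction L generalizing a p with
  | zero => rwa [show a = K + 1 by omega] at hpa
  | succ L ih =>
    by_cases haK : a < K
    · exact ih (a := a + 1) (by omega) (pushWeights_nonneg hp)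
        (by rwa [pushWeights_succ haK]) (by omega)
    · refine ih (a := K + 1) (by omega) (pushWeights_nonneg hp) ?_ (by omega)
      rw [pushWeights_last]
      rcases (show a = K ∨ a = K + 1 by omega) with rfl | rfl
      · linarith [hp (a + 1)]
      · linarith [hp K]

lemma colSum_add_le (hM : ∀ u ≥ t, (n (u + 1) : ℝ) ≤ M) {b : ℝ}
    (hb : ∀ j < K + 2, colSum K n t j ≤ b) (L : ℕ) :
    ∀ j < K + 2, colSum K n (t + L) j ≤ (M + 2) ^ L * b := by
  induction L with
  | zero => simpa using hb
  | succ L ih =>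
    intro j hj
    have hb0 : 0 ≤ (M + 2) ^ L * b := (colSum_pos _ _).le.trans (ih 0 (by omega))
    have hm := hM (t + L) (Nat.le_add_right t L)
    have hm0 : (0 : ℝ) ≤ n (t + L + 1) := Nat.cast_nonneg _
    have h0 := ih 0 (by omega)
    have hl := ih (K + 1) (by omega)
    rw [← add_assoc, pow_succ]
    rcases (show j < K ∨ j = K ∨ j = K + 1 by omega) with hj | rfl | rfl
    · rw [colSum_succ_of_lt hj]
      nlinarith [ih (j + 1) (by omega)]
    · rw [colSum_succ_self]
      nlinarith [mul_le_mul hm h0 (colSum_pos _ _).le (by linarith)]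
    · rw [colSum_succ_last]
      nlinarith [mul_le_mul hm h0 (colSum_pos _ _).le (by linarith)]

variable (hM : ∀ u ≥ t, (n (u + 1) : ℝ) ≤ M) (hC1 : 1 ≤ C)
  (hC : ∀ j < K + 2, colSum K n t j ≤ C * colSum K n t (K + 1))
include hM hC1 hC

lemma exists_vertex_add_eq {a : ℕ} (ha : a < K + 2) :
    ∃ x ∈ convexHull ℝ (vertex K n t '' ↑(range (K + 2))),
      vertex K n (t + (K + 2)) a =
        ((M + 2) ^ (K + 2) * C)⁻¹ • vertex K n t (K + 1) +
          (1 - ((M + 2) ^ (K + 2) * C)⁻¹) • x := by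
  set q := pushWeightsIter K n t (K + 2) (idCols a)
  have hq : ∀ u, 0 ≤ q u :=
    pushWeightsIter_nonneg _ (fun u => by unfold idCols; split_ifs <;> norm_num)
  have hM0 : 0 ≤ M := (n (t + 1)).cast_nonneg.trans (hM t le_rfl)
  have hσ := colSum_pos (K := K) (n := n) t (K + 1)
  have hden : mixDen K n q t = colSum K n (t + (K + 2)) a := by
    rw [← mixDen_add, mixDen_idCols ha]
  have hden_le : mixDen K n q t ≤ (M + 2) ^ (K + 2) * C * colSum K n t (K + 1) := by
    rw [hden, mul_assoc]
    exact colSum_add_le hM hC (K + 2) a ha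
  have hd : 0 < mixDen K n q t := hden ▸ colSum_pos _ _
  have hlast : 1 ≤ q (K + 1) :=
    one_le_pushWeightsIter_last ha (fun u => by unfold idCols; split_ifs <;> norm_num)
      (by simp [idCols]) (by omega)
  have hbig : 1 < (M + 2) ^ (K + 2) * C :=
    one_lt_mul_of_lt_of_le (one_lt_pow₀ (by linarith) (by omega)) hC1
  rw [vertex, mix_add, mix_eq_sum_vertex hd.ne']
  refine exists_eq_smul_add_smul_mem_convexHull
    (fun u _ => div_nonneg (mul_nonneg (hq u) (colSum_pos t u).le) hd.le)
    (by rw [← sum_div]; exact div_self hd.ne') (mem_range.2 (by omega)) ?_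
    (inv_lt_one_of_one_lt₀ hbig)
  rw [inv_eq_one_div, div_le_div_iff₀ (by linarith) hd]
  nlinarith [mul_le_mul_of_nonneg_right hlast (mul_nonneg hσ.le (zero_le_one.trans hbig.le))]

lemma dist_vertex_add_le {d : ℝ}
    (hd : ∀ a < K + 2, ∀ b < K + 2, dist (vertex K n t a) (vertex K n t b) ≤ d)
    {a b : ℕ} (ha : a < K + 2) (hb : b < K + 2) :
    dist (vertex K n (t + (K + 2)) a) (vertex K n (t + (K + 2)) b) ≤
      (1 - ((M + 2) ^ (K + 2) * C)⁻¹) * d := by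
  obtain ⟨x, hx, hxa⟩ := exists_vertex_add_eq hM hC1 hC ha
  obtain ⟨y, hy, hyb⟩ := exists_vertex_add_eq hM hC1 hC hb
  have hc : ((M + 2) ^ (K + 2) * C)⁻¹ ≤ 1 :=
    inv_le_one_of_one_le₀ (one_le_mul_of_one_le_of_one_le
      (one_le_pow₀ (by linarith [(n (t + 1)).cast_nonneg.trans (hM t le_rfl)])) hC1)
  rw [hxa, hyb, dist_add_left, dist_smul₀, Real.norm_of_nonneg (by linarith)]
  refine mul_le_mul_of_nonneg_left (dist_le_of_mem_convexHull ?_ hx hy) (by linarith)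
  rintro _ ⟨a', ha', rfl⟩ _ ⟨b', hb', rfl⟩
  exact hd a' (mem_range.1 ha') b' (mem_range.1 hb')

end Contraction

section Dynamics

variable {K : ℕ} {n : ℕ → ℕ}

lemma Balanced.exists_width_lt {R : ℕ} {T M : ℝ} (hB : Balanced K n R T M)
    (hev : ∀ u, ∃ v ≥ u, n (v + 1) ≠ 0) {δ : ℝ} (hδ : 0 < δ) (R' : ℕ) :
    ∃ r ≥ R', width K n r < δ := by
  obtain ⟨C, hC1, hC⟩ := hB.exists_colSum_le hev
  set c := ((M + 2) ^ (K + 2) * C)⁻¹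
  have hM := hB.bound_nonneg
  have hc0 : 0 < c := by positivity
  have hc1 : c ≤ 1 := inv_le_one_of_one_le₀ (one_le_mul_of_one_le_of_one_le
    (one_le_pow₀ (by linarith)) hC1)
  set t₀ := max R R'
  have hdiam : ∀ i : ℕ, ∀ a < K + 2, ∀ b < K + 2,
      dist (vertex K n (t₀ + i * (K + 2)) a) (vertex K n (t₀ + i * (K + 2)) b) ≤
        (1 - c) ^ i * 2 := by
    intro i
    induction i with
    | zero =>
      intro a ha b hb
      simpa using dist_le_two_of_mem_simplex (vertex_mem_simplex _ ha) (vertex_mem_simplex _ hb)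
    | succ i ih =>
      intro a ha b hb
      rw [show t₀ + (i + 1) * (K + 2) = t₀ + i * (K + 2) + (K + 2) by ring, pow_succ,
        mul_comm _ (1 - c), mul_assoc]
      exact dist_vertex_add_le (fun u hu => hB.digit_le u (by omega)) hC1
        (hC _ (by omega)) ih ha hb
  obtain ⟨i, hi⟩ := exists_pow_lt_of_lt_one (half_pos hδ) (show 1 - c < 1 by linarith)
  exact ⟨t₀ + i * (K + 2), by omega,
    (hdiam i K (by omega) (K + 1) (by omega)).trans_lt (by linarith)⟩

lemma balanced_of_le {δ : ℝ} (hδ : 0 < δ) {R : ℕ}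
    (h : ∀ r ≥ R, δ ≤ width K n r ∧ δ ≤ 2 * gap K n r) :
    Balanced K n R (2 / δ) ((2 / δ) ^ 2) := by
  have hgap : ∀ r ≥ R, δ * (n (r + 1) * colSum K n r 0 + colSum K n r (K + 1)) ≤
      2 * colSum K n r (K + 1) := fun r hr => by
    have h2 := (h r hr).2
    rw [gap, ← mul_div_assoc, le_div_iff₀ (add_pos_of_nonneg_of_pos
      (mul_nonneg (Nat.cast_nonneg _) (colSum_pos r 0).le) (colSum_pos r _))] at h2
    exact h2
  have hlast : ∀ r ≥ R, δ * colSum K n r (K + 1) ≤ 2 * colSum K n r 0 := fun r hr => by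
    have hτ := colSum_pos (K := K) (n := n) r 0
    have hσ := colSum_pos (K := K) (n := n) r (K + 1)
    have h1 := (h (r + 1) (by omega)).1.trans (width_succ_le.trans (mul_le_mul_of_nonneg_left
      (dist_le_two_of_mem_simplex (vertex_mem_simplex r (by omega))
        (vertex_mem_simplex r (by omega))) (by positivity)))
    rw [div_mul_eq_mul_div, le_div_iff₀ (by positivity)] at h1
    nlinarith
  refine ⟨?_, fun r hr => ?_, fun r hr hm => ?_, fun r hr => ?_⟩
  · rw [le_div_iff₀ hδ, one_mul]
    exact (h R le_rfl).1.trans (width_le_two R)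
  · rw [div_mul_eq_mul_div, le_div_iff₀ hδ]
    linarith [hlast r hr]
  · have hm1 : (1 : ℝ) ≤ n (r + 1) := by exact_mod_cast Nat.one_le_iff_ne_zero.2 hm
    rw [div_mul_eq_mul_div, le_div_iff₀ hδ]
    have hτ := colSum_pos (K := K) (n := n) r 0
    have hσ := colSum_pos (K := K) (n := n) r (K + 1)
    nlinarith [hgap r hr, mul_le_mul_of_nonneg_right hm1 (mul_pos hδ hτ).le, mul_pos hδ hσ]
  · rw [div_pow, le_div_iff₀ (by positivity)]
    have hτ := colSum_pos (K := K) (n := n) r 0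
    have hσ := colSum_pos (K := K) (n := n) r (K + 1)
    have hm : (0 : ℝ) ≤ n (r + 1) := Nat.cast_nonneg _
    have h1 : δ * (n (r + 1) * colSum K n r 0) ≤ 2 * colSum K n r (K + 1) := by
      nlinarith [hgap r hr]
    have h2 : δ ^ 2 * n (r + 1) * colSum K n r 0 ≤ 4 * colSum K n r 0 := by
      nlinarith [hlast r hr]
    nlinarith

lemma exists_min_width_gap_lt {δ : ℝ} (hδ : 0 < δ) (R : ℕ) :
    ∃ r ≥ R, min (width K n r) (2 * gap K n r) < δ := by
  by_contra! h
  have hB := balanced_of_le hδ fun r hr => le_min_iff.1 (h r hr)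
  obtain ⟨r, hr, hw⟩ : ∃ r ≥ R, width K n r < δ := by
    by_cases hev : ∀ u, ∃ v ≥ u, n (v + 1) ≠ 0
    · exact hB.exists_width_lt hev hδ R
    · push Not at hev
      obtain ⟨u₀, hu₀⟩ := hev
      exact exists_width_lt_of_digits_zero hu₀ hδ R
  exact hw.not_ge (le_min_iff.1 (h r hr)).1

end Dynamics

/-- for every `k ≥ 2`, `n ∈ ℕ^ℕ` and `ε > 0`, there are infinitely many `r`
with `d_H(F_{n,r}, ⋂_s A_{n,s}) < ε`. -/
theorem stmt0 (k : ℕ) (hk : 2 ≤ k) (n : ℕ → ℕ) (ε : ℝ) (hε : 0 < ε) :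
    ∀ R : ℕ, ∃ r, R ≤ r ∧ Metric.hausdorffDist (Fnr k n r) (⋂ s, Anr k n s) < ε := by
  obtain ⟨K, rfl⟩ : ∃ K, k = K + 2 := ⟨k - 2, by omega⟩
  intro R
  obtain ⟨R₀, hR₀⟩ := eventually_hausdorffDist_le (n := n) (half_pos hε)
  obtain ⟨r, hr, hsmall⟩ :=
    exists_min_width_gap_lt (K := K) (n := n) (half_pos hε) (max R R₀)
  refine ⟨r, le_of_max_le_left hr, (hR₀ r (le_of_max_le_right hr)).trans_lt ?_⟩
  exact max_lt (half_lt_self hε) (hsmall.trans (half_lt_self hε))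

end BetaDF
end

section
/- For every integer k ≥ 2, the map S : N → Σ is strictly order-preserving (m < n in N implies S(m) < S(n) in the lexicographic order on Σ) and continuous; consequently S is a homeomorphism from N onto its image S(N) ⊆ Σ. -/
open Filter Topology
open scoped Classical

namespace BetaDF

/-- The metric topology on `N`, generated by the open balls of the metric `dN`. -/
noncomputable instance : TopologicalSpace NN :=
  TopologicalSpace.generateFrom {B | ∃ (m : NN) (ε : ℝ), B = {p : NN | dN p m < ε}}

/-!
Let `r` be the first index where `m` and `n` differ, say `n_r < m_r`, and let `m'`, `n'` be their
`r`-fold shifts. Then `S(m')` begins with `(k-1) 0^{n_r+1}` while `S(n')` begins with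
`(k-1) 0^{n_r}` and a nonzero digit, and `S(m) = Λ_{n_0} ∘ ⋯ ∘ Λ_{n_{r-1}} (S(m'))`, likewise for `n`.
Each substitution `Λ_c` preserves this first difference, moves it to the right and raises the
potential `(k-1) d + S(m)_d` by more than `c`, while multiplying `d + 1` by at most `c + 2`. So the
position `d` of the first difference of `S(m)` and `S(n)` is bounded from both sides in terms of
the exponent `X` of `dN m n = 2^{-X}`: small distance forces long agreement of the images and
conversely. As `dN` is an ultrametric, this makes `S` an embedding.
-/

open Finset

section Substitution

def substPrefix (σ : ℕ → List ℕ) (w : Seq) (t : ℕ) : List ℕ :=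
  ((List.range t).map fun r => σ (w r)).flatten

/-- When every `σ i` is nonempty, the first `m + 1` blocks are longer than `m`, so the default
value `0` is never read. -/
def subst (σ : ℕ → List ℕ) (w : Seq) : Seq := fun m => (substPrefix σ w (m + 1)).getD m 0

theorem lamSub_eq_subst (k n : ℕ) : lamSub k n = subst (lamWord k n) := rfl

variable {σ : ℕ → List ℕ}

theorem substPrefix_succ (w : Seq) (t : ℕ) :
    substPrefix σ w (t + 1) = substPrefix σ w t ++ σ (w t) := by
  simp [substPrefix, List.range_succ]

theorem substPrefix_isPrefix (w : Seq) {t t' : ℕ} (h : t ≤ t') :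
    substPrefix σ w t <+: substPrefix σ w t' := by
  induction t', h using Nat.le_induction with
  | base => exact List.prefix_refl _
  | succ t' _ ih => exact ih.trans (substPrefix_succ w t' ▸ List.prefix_append _ _)

theorem substPrefix_congr {u v : Seq} {t : ℕ} (h : ∀ s < t, u s = v s) :
    substPrefix σ u t = substPrefix σ v t := by
  simp only [substPrefix]
  exact congrArg _ (List.map_congr_left fun r hr => by rw [h r (List.mem_range.1 hr)])

theorem length_substPrefix_le {B : ℕ} (hB : ∀ i, (σ i).length ≤ B) (w : Seq) (t : ℕ) :
    (substPrefix σ w t).length ≤ t * B := by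
  induction t with
  | zero => simp [substPrefix]
  | succ t ih =>
    rw [substPrefix_succ, List.length_append, Nat.succ_mul]
    exact Nat.add_le_add ih (hB _)

theorem length_substPrefix_succ_ge (hσ : ∀ i, σ i ≠ []) (w : Seq) (t : ℕ) :
    (σ (w 0)).length + t ≤ (substPrefix σ w (t + 1)).length := by
  induction t with
  | zero => simp [substPrefix]
  | succ t ih =>
    rw [substPrefix_succ, List.length_append]
    have := List.length_pos_iff.2 (hσ (w (t + 1)))
    omega

theorem le_length_substPrefix (hσ : ∀ i, σ i ≠ []) (w : Seq) (t : ℕ) :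
    t ≤ (substPrefix σ w t).length := by
  cases t with
  | zero => exact Nat.zero_le _
  | succ t =>
    have := length_substPrefix_succ_ge hσ w t
    have := List.length_pos_iff.2 (hσ (w 0))
    omega

theorem subst_apply_of_lt_length (hσ : ∀ i, σ i ≠ []) {w : Seq} {t m : ℕ}
    (h : m < (substPrefix σ w t).length) : subst σ w m = (substPrefix σ w t).getD m 0 := by
  have hm : m < (substPrefix σ w (m + 1)).length :=
    Nat.lt_of_lt_of_le (Nat.lt_succ_self m) (le_length_substPrefix hσ w _)
  simp only [subst, List.getD_eq_getElem _ _ hm, List.getD_eq_getElem _ _ h]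
  rcases le_total (m + 1) t with hle | hle
  · exact (substPrefix_isPrefix w hle).getElem hm
  · exact ((substPrefix_isPrefix w hle).getElem h).symm

theorem subst_length_add (hσ : ∀ i, σ i ≠ []) (w : Seq) (t : ℕ) {q : ℕ}
    (hq : q < (σ (w t)).length) :
    subst σ w ((substPrefix σ w t).length + q) = (σ (w t)).getD q 0 := by
  have h : (substPrefix σ w t).length + q < (substPrefix σ w (t + 1)).length := by
    rw [substPrefix_succ, List.length_append]; omega
  rw [subst_apply_of_lt_length hσ h, substPrefix_succ, List.getD_append_right _ _ _ _ (by omega),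
    Nat.add_sub_cancel_left]

theorem subst_agree (hσ : ∀ i, σ i ≠ []) {u v : Seq} {t : ℕ} (h : ∀ s < t, u s = v s) :
    ∀ s < (substPrefix σ u t).length, subst σ u s = subst σ v s := by
  intro s hs
  have hs' : s < (substPrefix σ v t).length := substPrefix_congr h ▸ hs
  rw [subst_apply_of_lt_length hσ hs, subst_apply_of_lt_length hσ hs', substPrefix_congr h]

theorem eventually_agree_nhds (w : Seq) (J : ℕ) : ∀ᶠ u in 𝓝 w, ∀ s < J, u s = w s := by
  have h : ∀ s, ∀ᶠ u in 𝓝 w, u s = w s := fun s =>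
    (continuous_apply s).continuousAt.eventually_mem ((isOpen_discrete ({w s} : Set ℕ)).mem_nhds rfl)
  simpa using (Filter.eventually_all_finset (Finset.range J)).2 fun s _ => h s

theorem continuous_subst : Continuous (subst σ) := by
  refine continuous_pi fun m => continuous_iff_continuousAt.2 fun w => ?_
  rw [ContinuousAt, nhds_discrete ℕ, tendsto_pure]
  filter_upwards [eventually_agree_nhds w (m + 1)] with u hu
  simp only [subst, substPrefix_congr hu]

end Substitution

section LamWord

theorem lamWord_ne_nil (k a i : ℕ) : lamWord k a i ≠ [] := by
  unfold lamWord; split_ifs <;> simp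

theorem length_lamWord_le (k a i : ℕ) : (lamWord k a i).length ≤ a + 2 := by
  unfold lamWord; split_ifs <;> simp

theorem lamWord_top (k a : ℕ) : lamWord k a (k - 1) = (k - 1) :: List.replicate a 0 := by
  unfold lamWord; rw [if_neg (by omega), if_neg (by omega)]

theorem lamWord_sub_two {k : ℕ} (hk : 2 ≤ k) (a : ℕ) :
    lamWord k a (k - 2) = lamWord k (a + 1) (k - 1) := by
  rw [lamWord_top]; unfold lamWord; rw [if_neg (by omega), if_pos (by omega)]

theorem lamWord_getD_zero (k a i : ℕ) :
    (lamWord k a i).getD 0 0 = if i + 2 < k then i + 1 else k - 1 := by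
  unfold lamWord; split_ifs <;> rfl

theorem lamWord_top_getD (k a q : ℕ) : (lamWord k a (k - 1)).getD q 0 = baseSeq k q := by
  rw [lamWord_top]
  cases q with
  | zero => rfl
  | succ q => simp [baseSeq, List.getD_eq_getElem?_getD]

theorem length_lamWord_top (k a : ℕ) : (lamWord k a (k - 1)).length = a + 1 := by
  simp [lamWord_top]

variable {k a : ℕ} {w : Seq}

theorem lamSub_apply_of_le (hw : w 0 = k - 1) {s : ℕ} (hs : s ≤ a) :
    lamSub k a w s = baseSeq k s := by
  have := subst_length_add (lamWord_ne_nil k a) w 0 (q := s)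
    (by rw [hw, length_lamWord_top]; omega)
  rwa [hw, lamWord_top_getD, show substPrefix (lamWord k a) w 0 = [] from rfl, List.length_nil,
    Nat.zero_add] at this

theorem lamSub_apply_zero (hw : w 0 = k - 1) : lamSub k a w 0 = k - 1 :=
  lamSub_apply_of_le hw (Nat.zero_le a)

theorem lamSub_apply_succ (hw : w 0 = k - 1) :
    lamSub k a w (a + 1) = (lamWord k a (w 1)).getD 0 0 := by
  have := subst_length_add (lamWord_ne_nil k a) w 1 (q := 0)
    (List.length_pos_iff.2 (lamWord_ne_nil k a _))
  rwa [show substPrefix (lamWord k a) w 1 = lamWord k a (w 0) from by simp [substPrefix], hw,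
    length_lamWord_top] at this

theorem length_substPrefix_lamWord_ge (hw : w 0 = k - 1) (t : ℕ) :
    t + 1 + a ≤ (substPrefix (lamWord k a) w (t + 1)).length := by
  have := length_substPrefix_succ_ge (lamWord_ne_nil k a) w t
  rw [hw, length_lamWord_top] at this
  omega

theorem lamSub_agree {u v : Seq} (hu : u 0 = k - 1) {t : ℕ} (h : ∀ s < t + 1, u s = v s) :
    ∀ s < t + 1 + a, lamSub k a u s = lamSub k a v s := fun s hs =>
  subst_agree (lamWord_ne_nil k a) h s ((length_substPrefix_lamWord_ge hu t).trans_lt' hs)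

theorem lamSub_topSeq_zero (k : ℕ) : lamSub k 0 (topSeq k) = topSeq k := by
  have hpre : ∀ t, substPrefix (lamWord k 0) (topSeq k) t = List.replicate t (k - 1) := by
    intro t
    induction t with
    | zero => rfl
    | succ t ih => rw [substPrefix_succ, ih, topSeq, lamWord_top, List.replicate_succ']; rfl
  funext m
  simp [lamSub_eq_subst, subst, hpre, topSeq]

end LamWord

def LexLtAt (k : ℕ) (u v : Seq) (d : ℕ) : Prop := (∀ s < d, u s = v s) ∧ u d < v d ∧ v d < k

theorem LexLtAt.seqLt {k : ℕ} {u v : Seq} {d : ℕ} (h : LexLtAt k u v d) : seqLt u v :=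
  ⟨d, h.1, h.2.1⟩

section Step

variable {k c t : ℕ} {u v : Seq}

theorem mul_length_substPrefix_lamWord_ge (hk : 2 ≤ k) (hu : u 0 = k - 1) :
    (k - 1) * (t + 1) + c ≤ (k - 1) * (substPrefix (lamWord k c) u (t + 1)).length :=
  calc (k - 1) * (t + 1) + c ≤ (k - 1) * (t + 1) + (k - 1) * c :=
        Nat.add_le_add_left (Nat.le_mul_of_pos_left c (by omega)) _
    _ = (k - 1) * (t + 1 + c) := (Nat.mul_add ..).symm
    _ ≤ _ := Nat.mul_le_mul_left _ (length_substPrefix_lamWord_ge hu t)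

theorem LexLtAt.exists_lamSub_of_add_two_lt (hk : 2 ≤ k) (h : LexLtAt k u v (t + 1))
    (hu : u 0 = k - 1) (hi : u (t + 1) + 2 < k) :
    ∃ d', LexLtAt k (lamSub k c u) (lamSub k c v) d' ∧
      (k - 1) * (t + 1) + u (t + 1) + c < (k - 1) * d' + lamSub k c u d' ∧
      d' + 1 ≤ (t + 1 + 1) * (c + 2) := by
  obtain ⟨hag, hlt, hvk⟩ := h
  have hσ := lamWord_ne_nil k c
  have hL := length_substPrefix_le (length_lamWord_le k c) u (t + 1)
  have hpot := mul_length_substPrefix_lamWord_ge (c := c) hk hu (t := t)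
  have huL := subst_length_add hσ u (t + 1) (List.length_pos_iff.2 (hσ _))
  have hvL := subst_length_add hσ v (t + 1) (List.length_pos_iff.2 (hσ _))
  rw [Nat.add_zero, lamWord_getD_zero, if_pos hi] at huL
  rw [Nat.add_zero, lamWord_getD_zero, ← substPrefix_congr hag] at hvL
  refine ⟨_, ⟨subst_agree hσ hag, ?_, ?_⟩, ?_, ?_⟩
  · rw [lamSub_eq_subst, huL, hvL]; split_ifs <;> omega
  · rw [lamSub_eq_subst, hvL]; split_ifs <;> omega
  · rw [lamSub_eq_subst, huL]; omega
  · rw [add_one_mul]; omega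

/-- Here `Λ_c u` and `Λ_c v` continue with `(k-1) 0^{c+1}` and `(k-1) 0^c`, so they agree on
`c + 1` more letters and then differ as `0 < Λ_c(v (t + 2))₀`. -/
theorem LexLtAt.exists_lamSub_of_eq (hk : 2 ≤ k) (h : LexLtAt k u v (t + 1))
    (hu : u 0 = k - 1) (hu' : u (t + 1) = k - 2) (hv' : v (t + 1) = k - 1) :
    ∃ d', LexLtAt k (lamSub k c u) (lamSub k c v) d' ∧
      (k - 1) * (t + 1) + u (t + 1) + c < (k - 1) * d' + lamSub k c u d' ∧
      d' + 1 ≤ (t + 1 + 1) * (c + 2) := by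
  have hag := h.1
  have hσ := lamWord_ne_nil k c
  set L := (substPrefix (lamWord k c) u (t + 1)).length with hLdef
  have hLv : (substPrefix (lamWord k c) v (t + 1)).length = L := by
    rw [hLdef, substPrefix_congr hag]
  have hL : L ≤ (t + 1) * (c + 2) := length_substPrefix_le (length_lamWord_le k c) u _
  have hpot : (k - 1) * (t + 1) + c ≤ (k - 1) * L := mul_length_substPrefix_lamWord_ge hk hu
  have hub : ∀ q ≤ c + 1, lamSub k c u (L + q) = baseSeq k q := fun q hq => by
    rw [lamSub_eq_subst, subst_length_add hσ u (t + 1)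
      (by rw [hu', lamWord_sub_two hk, length_lamWord_top]; omega),
      hu', lamWord_sub_two hk, lamWord_top_getD]
  have hvb : ∀ q ≤ c, lamSub k c v (L + q) = baseSeq k q := fun q hq => by
    rw [← hLv, lamSub_eq_subst, subst_length_add hσ v (t + 1)
      (by rw [hv', length_lamWord_top]; omega), hv', lamWord_top_getD]
  have hlen : (substPrefix (lamWord k c) v (t + 2)).length = L + (c + 1) := by
    rw [substPrefix_succ, List.length_append, hLv, hv', length_lamWord_top]
  have hvc : lamSub k c v (L + (c + 1)) = (lamWord k c (v (t + 2))).getD 0 0 := by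
    rw [← hlen, ← Nat.add_zero (List.length _), lamSub_eq_subst,
      subst_length_add hσ v (t + 2) (List.length_pos_iff.2 (hσ _))]
  have huc : lamSub k c u (L + (c + 1)) = 0 := hub _ le_rfl
  refine ⟨L + (c + 1), ⟨fun s hs => ?_, ?_, ?_⟩, ?_, ?_⟩
  · rcases lt_or_ge s L with hs' | hs'
    · exact subst_agree hσ hag s hs'
    · obtain ⟨q, rfl⟩ := Nat.exists_eq_add_of_le hs'
      rw [hub q (by omega), hvb q (by omega)]
  · rw [huc, hvc, lamWord_getD_zero]; split_ifs <;> omega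
  · rw [hvc, lamWord_getD_zero]; split_ifs <;> omega
  · have := Nat.le_mul_of_pos_right (k - 1) (show 0 < c + 1 by omega)
    rw [huc, hu', Nat.mul_add (k - 1) L (c + 1)]
    omega
  · rw [add_one_mul]; omega

/-- The potential `(k - 1) * d + u d` grows by more than `c` under `Λ_c`: either the digit at the
first difference climbs, or the first difference moves past `c + 1` zeros. -/
theorem LexLtAt.exists_lamSub (hk : 2 ≤ k) {d : ℕ} (h : LexLtAt k u v d) (hu : u 0 = k - 1) :
    ∃ d', LexLtAt k (lamSub k c u) (lamSub k c v) d' ∧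
      (k - 1) * d + u d + c < (k - 1) * d' + lamSub k c u d' ∧ d' + 1 ≤ (d + 1) * (c + 2) := by
  obtain ⟨t, rfl⟩ : ∃ t, d = t + 1 :=
    Nat.exists_eq_add_one.2 (Nat.pos_of_ne_zero fun h0 => by subst h0; have := h.2; omega)
  by_cases hi : u (t + 1) + 2 < k
  · exact h.exists_lamSub_of_add_two_lt hk hu hi
  · exact h.exists_lamSub_of_eq hk hu (by have := h.2; omega) (by have := h.2; omega)

end Step

section Limit

variable {k : ℕ}

theorem lamChain_succ_eq_lamSub (g : ℕ → ℕ) (r : ℕ) (w : Seq) :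
    lamChain k g (r + 1) w = lamSub k (g 0) (lamChain k (fun s => g (s + 1)) r w) := by
  induction r generalizing w with
  | zero => rfl
  | succ r ih => exact ih _

theorem lamChain_apply_zero (g : ℕ → ℕ) (r : ℕ) {w : Seq} (hw : w 0 = k - 1) :
    lamChain k g r w 0 = k - 1 := by
  induction r generalizing w with
  | zero => exact lamSub_apply_zero hw
  | succ r ih => exact ih (lamSub_apply_zero hw)

theorem lamChain_agree (g : ℕ → ℕ) (r : ℕ) {u v : Seq} (hu : u 0 = k - 1) {t : ℕ}
    (h : ∀ s < t + 1, u s = v s) :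
    ∀ s < t + 1 + ∑ i ∈ range (r + 1), g i, lamChain k g r u s = lamChain k g r v s := by
  induction r generalizing u v t with
  | zero => exact fun s hs => lamSub_agree hu h s (by simpa using hs)
  | succ r ih =>
    have h' := lamSub_agree (a := g (r + 1)) hu h
    rw [show t + 1 + g (r + 1) = t + g (r + 1) + 1 by ring] at h'
    intro s hs
    rw [sum_range_succ] at hs
    exact ih (lamSub_apply_zero hu) h' s (by omega)

theorem eventually_le_or_succ_eq_of_monotone {P : ℕ → ℕ} (hP : Monotone P) (j : ℕ) :
    ∀ᶠ r in atTop, j ≤ P r ∨ P (r + 1) = P r := by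
  by_cases h : ∃ r₀, j ≤ P r₀
  · obtain ⟨r₀, hr₀⟩ := h
    filter_upwards [eventually_ge_atTop r₀] with r hr using Or.inl (hr₀.trans (hP hr))
  · simp only [not_exists, not_le] at h
    have hbdd : BddAbove (Set.range P) := ⟨j, by rintro _ ⟨r, rfl⟩; exact (h r).le⟩
    obtain ⟨r₀, hr₀⟩ := Nat.sSup_mem (Set.range_nonempty P) hbdd
    filter_upwards [eventually_ge_atTop r₀] with r hr
    have hle : P (r + 1) ≤ P r₀ := hr₀ ▸ le_csSup hbdd ⟨r + 1, rfl⟩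
    exact Or.inr (le_antisymm (hle.trans (hP hr)) (hP r.le_succ))

/-- `Λ_{n,r}((k-1)(k-1)…)` and `Λ_{n,r+1}((k-1)(k-1)…)` either coincide (when `n_{r+1} = 0`)
or agree on the first `1 + n₀ + ⋯ + n_r` letters. -/
theorem eventually_lamChain_succ_eq (g : ℕ → ℕ) (j : ℕ) :
    ∀ᶠ r in atTop, lamChain k g (r + 1) (topSeq k) j = lamChain k g r (topSeq k) j := by
  have hP : Monotone fun r => ∑ i ∈ range (r + 1), g i := fun a b hab =>
    sum_le_sum_of_subset (range_subset_range.2 (by omega))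
  filter_upwards [eventually_le_or_succ_eq_of_monotone hP j] with r hr
  change lamChain k g r (lamSub k (g (r + 1)) (topSeq k)) j = _
  rcases hr with hj | hg
  · refine lamChain_agree g r (lamSub_apply_zero rfl) (t := 0) (fun s hs => ?_) j (by omega)
    rw [Nat.lt_one_iff.1 hs]
    exact lamSub_apply_zero rfl
  · rw [sum_range_succ] at hg
    rw [show g (r + 1) = 0 by omega, lamSub_topSeq_zero]

theorem tendsto_lamChain_Sseq (g : ℕ → ℕ) :
    Tendsto (fun r => lamChain k g r (topSeq k)) atTop (𝓝 (Sseq k g)) := by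
  refine tendsto_nhds_limUnder ?_
  have h : ∀ j, ∃ x, Tendsto (fun r => lamChain k g r (topSeq k) j) atTop (𝓝 x) := fun j => by
    obtain ⟨x, hx⟩ := (eventuallyConst_atTop_nat (f := fun r => lamChain k g r (topSeq k) j)).2
      (eventually_atTop.1 (eventually_lamChain_succ_eq g j)) |>.exists_tendsto
    exact ⟨x, by rwa [nhds_discrete]⟩
  choose x hx using h
  exact ⟨x, tendsto_pi_nhds.2 hx⟩

theorem Sseq_eq_lamSub (g : ℕ → ℕ) : Sseq k g = lamSub k (g 0) (Sseq k fun s => g (s + 1)) := by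
  refine tendsto_nhds_unique ((tendsto_add_atTop_iff_nat 1).2 (tendsto_lamChain_Sseq g)) ?_
  simp only [lamChain_succ_eq_lamSub]
  exact (continuous_subst.tendsto _).comp (tendsto_lamChain_Sseq _)

theorem Sseq_apply_zero (g : ℕ → ℕ) : Sseq k g 0 = k - 1 :=
  tendsto_nhds_unique (tendsto_pi_nhds.1 (tendsto_lamChain_Sseq g) 0)
    (tendsto_const_nhds.congr fun r => (lamChain_apply_zero g r rfl).symm)

end Limit

def NN.tail (m : NN) : NN := ⟨fun r => m.1 (r + 1), fun r => m.2 (r + 1)⟩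

theorem NN.eq_top_of_le (m : NN) {r s : ℕ} (hrs : r ≤ s) (h : m.1 r = ⊤) : m.1 s = ⊤ := by
  induction s, hrs using Nat.le_induction with
  | base => exact h
  | succ s _ ih => exact m.2 s ih

section SN

variable {k : ℕ}

theorem lamList_apply_zero (l : List ℕ) {w : Seq} (hw : w 0 = k - 1) : lamList k l w 0 = k - 1 := by
  induction l with
  | nil => exact hw
  | cons a l ih => exact lamSub_apply_zero ih

theorem SN_apply_zero (m : NN) : SN k m 0 = k - 1 := by
  unfold SN
  split_ifs
  · exact lamList_apply_zero _ rfl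
  · exact Sseq_apply_zero _

theorem SN_of_eq_top {m : NN} (h : m.1 0 = ⊤) : SN k m = baseSeq k := by
  have hex : ∃ R, m.1 R = ⊤ := ⟨0, h⟩
  rw [SN, dif_pos hex, (Nat.find_eq_zero hex).2 h]
  rfl

theorem SN_of_ne_top {m : NN} (h : m.1 0 ≠ ⊤) :
    SN k m = lamSub k (m.1 0).toNat (SN k m.tail) := by
  by_cases hex : ∃ R, m.1 R = ⊤
  · have hex' : ∃ R, m.tail.1 R = ⊤ :=
      let ⟨R, hR⟩ := hex; ⟨R, m.eq_top_of_le R.le_succ hR⟩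
    rw [SN, dif_pos hex, SN, dif_pos hex', Nat.find_comp_succ hex hex' h, List.range_succ_eq_map,
      List.map_cons, List.map_map]
    rfl
  · have hex' : ¬ ∃ R, m.tail.1 R = ⊤ := fun ⟨R, hR⟩ => hex ⟨R + 1, hR⟩
    rw [SN, dif_neg hex, SN, dif_neg hex']
    exact Sseq_eq_lamSub _

theorem SN_apply_of_le {m : NN} {s : ℕ} (hs : (s : ℕ∞) ≤ m.1 0) : SN k m s = baseSeq k s := by
  by_cases h : m.1 0 = ⊤
  · rw [SN_of_eq_top h]
  · rw [SN_of_ne_top h]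
    exact lamSub_apply_of_le (SN_apply_zero _) (ENat.toNat_le_toNat hs h)

theorem SN_apply_toNat_add_one {n : NN} (h : n.1 0 ≠ ⊤) :
    SN k n ((n.1 0).toNat + 1) = (lamWord k (n.1 0).toNat (SN k n.tail 1)).getD 0 0 := by
  rw [SN_of_ne_top h]
  exact lamSub_apply_succ (SN_apply_zero _)

theorem lexLtAt_SN_of_lt_zero (hk : 2 ≤ k) {m n : NN} (hlt : n.1 0 < m.1 0) :
    LexLtAt k (SN k m) (SN k n) ((n.1 0).toNat + 1) ∧ SN k m ((n.1 0).toNat + 1) = 0 := by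
  have hn : n.1 0 ≠ ⊤ := hlt.ne_top
  have hb : ((n.1 0).toNat : ℕ∞) = n.1 0 := ENat.natCast_toNat hn
  have hm : SN k m ((n.1 0).toNat + 1) = 0 := by
    rw [SN_apply_of_le (by push_cast; exact Order.add_one_le_of_lt (hb ▸ hlt))]
    rfl
  have hnext := SN_apply_toNat_add_one (k := k) hn
  rw [lamWord_getD_zero] at hnext
  refine ⟨⟨fun s hs => ?_, ?_, ?_⟩, hm⟩
  · have hs' : (s : ℕ∞) ≤ n.1 0 := hb ▸ Nat.cast_le.2 (by omega)
    rw [SN_apply_of_le (hs'.trans hlt.le), SN_apply_of_le hs']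
  · rw [hm, hnext]; split_ifs <;> omega
  · rw [hnext]; split_ifs <;> omega

/-- `r + n₀ + ⋯ + n_r` is the exponent `X(m, n)` of the metric `dN m n = 2 ^ (-X(m, n))`. -/
theorem exists_lexLtAt_SN (hk : 2 ≤ k) (r : ℕ) :
    ∀ {m n : NN}, (∀ s < r, m.1 s = n.1 s) → n.1 r < m.1 r →
      ∃ d, LexLtAt k (SN k m) (SN k n) d ∧
        r + ∑ s ∈ range (r + 1), (n.1 s).toNat < (k - 1) * d + SN k m d ∧
        d + 1 ≤ 2 ^ (r + ∑ s ∈ range (r + 1), (n.1 s).toNat + 1) := by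
  induction r with
  | zero =>
    intro m n _ hlt
    obtain ⟨h, hm⟩ := lexLtAt_SN_of_lt_zero hk hlt
    refine ⟨_, h, ?_, ?_⟩
    · rw [hm]
      simp only [zero_add, range_one, sum_singleton, add_zero]
      exact Nat.lt_of_lt_of_le (Nat.lt_succ_self _) (Nat.le_mul_of_pos_left _ (by omega))
    · simpa using Nat.lt_two_pow_self
  | succ r ih =>
    intro m n hag hlt
    have hn0 : n.1 0 ≠ ⊤ := fun h => hlt.ne_top (n.eq_top_of_le (Nat.zero_le _) h)
    have hmn0 : m.1 0 = n.1 0 := hag 0 r.succ_pos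
    obtain ⟨d, hd, hpot, hbound⟩ :=
      ih (m := m.tail) (n := n.tail) (fun s hs => hag (s + 1) (by omega)) hlt
    set c := (n.1 0).toNat
    obtain ⟨d', hd', hpot', hbound'⟩ := hd.exists_lamSub (c := c) hk (SN_apply_zero _)
    have hm : SN k m = lamSub k c (SN k m.tail) := by rw [SN_of_ne_top (hmn0 ▸ hn0), hmn0]
    rw [← hm, ← SN_of_ne_top hn0] at hd'
    rw [← hm] at hpot'
    have hsum : ∑ s ∈ range (r + 1 + 1), (n.1 s).toNat =
        c + ∑ s ∈ range (r + 1), (n.tail.1 s).toNat := by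
      rw [sum_range_succ', add_comm]; rfl
    refine ⟨d', hd', by rw [hsum]; omega, ?_⟩
    calc d' + 1 ≤ (d + 1) * (c + 2) := hbound'
      _ ≤ 2 ^ (r + ∑ s ∈ range (r + 1), (n.tail.1 s).toNat + 1) * 2 ^ (c + 1) :=
        Nat.mul_le_mul hbound Nat.lt_two_pow_self
      _ = _ := by rw [hsum, ← pow_add]; ring_nf

end SN

section Metric

theorem NN.exists_firstDiff {p q : NN} (h : p ≠ q) :
    ∃ r, (∀ s < r, p.1 s = q.1 s) ∧ p.1 r ≠ q.1 r := by
  have hex : ∃ r, p.1 r ≠ q.1 r := by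
    by_contra! hc
    exact h (Subtype.ext (funext hc))
  exact ⟨Nat.find hex, fun s hs => not_not.1 (Nat.find_min hex hs), Nat.find_spec hex⟩

/-- `X(p, q)` in the definition of `dN` when `r` is the first index where `p` and `q` differ. -/
noncomputable def distExp (p q : NN) (r : ℕ) : ℕ :=
  r + (min (∑ s ∈ range (r + 1), p.1 s) (∑ s ∈ range (r + 1), q.1 s)).toNat

theorem distExp_comm (p q : NN) (r : ℕ) : distExp p q r = distExp q p r := by
  rw [distExp, distExp, min_comm]

/-- So for `p ≠ q` agreeing below `r`, `toNat` does not truncate in `distExp p q r`. -/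
theorem min_sum_ne_top {p q : NN} (hpq : p ≠ q) {r : ℕ} (hag : ∀ s < r, p.1 s = q.1 s) :
    min (∑ s ∈ range (r + 1), p.1 s) (∑ s ∈ range (r + 1), q.1 s) ≠ ⊤ := by
  intro h
  obtain ⟨hp, hq⟩ := min_eq_top.1 h
  obtain ⟨s₁, hs₁, hp⟩ := WithTop.sum_eq_top.1 hp
  obtain ⟨s₂, hs₂, hq⟩ := WithTop.sum_eq_top.1 hq
  refine hpq (Subtype.ext (funext fun s => ?_))
  rcases lt_or_ge s r with hs | hs
  · exact hag s hs
  · rw [p.eq_top_of_le (by simp at hs₁; omega) hp, q.eq_top_of_le (by simp at hs₂; omega) hq]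

theorem dN_self (p : NN) : dN p p = 0 := dif_pos rfl

theorem dN_nonneg (p q : NN) : 0 ≤ dN p q := by
  unfold dN
  split_ifs
  · exact le_rfl
  · positivity

theorem dN_eq_of_firstDiff {p q : NN} {r : ℕ} (hag : ∀ s < r, p.1 s = q.1 s)
    (hne : p.1 r ≠ q.1 r) : dN p q = 2⁻¹ ^ distExp p q r := by
  have hpq : p ≠ q := fun h => hne (h ▸ rfl)
  have hex : ∃ r, p.1 r ≠ q.1 r := ⟨r, hne⟩
  have hr : Nat.find hex = r :=
    (Nat.find_eq_iff hex).2 ⟨hne, fun s hs => not_not.2 (hag s hs)⟩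
  rw [dN, dif_neg hpq]
  simp only [hr]
  rw [distExp, ← Nat.cast_add, zpow_neg, zpow_natCast, inv_pow]

theorem dN_le_of_agree {p q : NN} (hpq : p ≠ q) {r : ℕ} (hag : ∀ s < r, p.1 s = q.1 s) :
    dN p q ≤ 2⁻¹ ^ distExp p q r := by
  obtain ⟨r', hag', hne⟩ := NN.exists_firstDiff hpq
  have hr : r ≤ r' := by
    by_contra! h
    exact hne (hag r' h)
  have hsub : range (r + 1) ⊆ range (r' + 1) := range_subset_range.2 (by omega)
  rw [dN_eq_of_firstDiff hag' hne]
  refine pow_le_pow_of_le_one (by norm_num) (by norm_num) (add_le_add hr ?_)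
  exact ENat.toNat_le_toNat (min_le_min (sum_le_sum_of_subset hsub) (sum_le_sum_of_subset hsub))
    (min_sum_ne_top hpq hag')

theorem dN_le_max (a b c : NN) : dN a c ≤ max (dN a b) (dN b c) := by
  rcases eq_or_ne a b with rfl | hab
  · exact le_max_right _ _
  rcases eq_or_ne b c with rfl | hbc
  · exact le_max_left _ _
  rcases eq_or_ne a c with rfl | hac
  · exact dN_self a ▸ le_max_of_le_left (dN_nonneg a b)
  obtain ⟨r₁, hag₁, hne₁⟩ := NN.exists_firstDiff hab
  obtain ⟨r₂, hag₂, hne₂⟩ := NN.exists_firstDiff hbc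
  rcases lt_trichotomy r₁ r₂ with h | rfl | h
  · have hcb : ∀ s < r₁ + 1, c.1 s = b.1 s := fun s hs => (hag₂ s (by omega)).symm
    refine le_max_of_le_left ((dN_le_of_agree hac fun s hs =>
      (hag₁ s hs).trans (hcb s (by omega)).symm).trans_eq ?_)
    rw [dN_eq_of_firstDiff hag₁ hne₁, distExp, distExp,
      sum_congr rfl fun s hs => hcb s (mem_range.1 hs)]
  · have hac' : ∀ s < r₁, a.1 s = c.1 s := fun s hs => (hag₁ s hs).trans (hag₂ s hs)
    refine (dN_le_of_agree hac hac').trans ?_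
    rw [dN_eq_of_firstDiff hag₁ hne₁, dN_eq_of_firstDiff hag₂ hne₂]
    have hfin := min_sum_ne_top hac hac'
    have hmono : ∀ {M : ℕ∞}, M ≤ min (∑ s ∈ range (r₁ + 1), a.1 s) (∑ s ∈ range (r₁ + 1), c.1 s) →
        (2⁻¹ : ℝ) ^ distExp a c r₁ ≤ 2⁻¹ ^ (r₁ + M.toNat) := fun hM =>
      pow_le_pow_of_le_one (by norm_num) (by norm_num)
        (Nat.add_le_add_left (ENat.toNat_le_toNat hM hfin) r₁)
    rcases le_total (∑ s ∈ range (r₁ + 1), a.1 s) (∑ s ∈ range (r₁ + 1), c.1 s) with h | h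
    · exact le_max_of_le_left (hmono (by rw [min_eq_left h]; exact min_le_left _ _))
    · exact le_max_of_le_right (hmono (by rw [min_eq_right h]; exact min_le_right _ _))
  · have hab' : ∀ s < r₂ + 1, a.1 s = b.1 s := fun s hs => hag₁ s (by omega)
    refine le_max_of_le_right ((dN_le_of_agree hac fun s hs =>
      (hab' s (by omega)).trans (hag₂ s hs)).trans_eq ?_)
    rw [dN_eq_of_firstDiff hag₂ hne₂, distExp, distExp,
      sum_congr rfl fun s hs => hab' s (mem_range.1 hs)]

theorem distExp_eq_of_lt {m n : NN} {r : ℕ} (hag : ∀ s < r, m.1 s = n.1 s) (hlt : n.1 r < m.1 r) :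
    distExp m n r = r + ∑ s ∈ range (r + 1), (n.1 s).toNat := by
  have hle : ∑ s ∈ range (r + 1), n.1 s ≤ ∑ s ∈ range (r + 1), m.1 s := by
    refine sum_le_sum fun s hs => ?_
    rcases Nat.lt_succ_iff_lt_or_eq.1 (mem_range.1 hs) with hs | rfl
    · exact (hag s hs).ge
    · exact hlt.le
  rw [distExp, min_eq_right hle, ENat.toNat_sum fun s hs h =>
    hlt.ne_top (n.eq_top_of_le (Nat.lt_succ_iff.1 (mem_range.1 hs)) h)]

theorem exists_dN_eq_SN_firstDiff {k : ℕ} (hk : 2 ≤ k) {p q : NN} (h : p ≠ q) :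
    ∃ X d : ℕ, dN p q = 2⁻¹ ^ X ∧ (∀ s < d, SN k p s = SN k q s) ∧ SN k p d ≠ SN k q d ∧
      X < (k - 1) * (d + 1) ∧ d + 1 ≤ 2 ^ (X + 1) := by
  obtain ⟨r, hag, hne⟩ := NN.exists_firstDiff h
  have hdN := dN_eq_of_firstDiff hag hne
  rcases hne.lt_or_gt with hlt | hlt
  · have hag' : ∀ s < r, q.1 s = p.1 s := fun s hs => (hag s hs).symm
    obtain ⟨d, ⟨hagd, hd, hdk⟩, hpot, hbound⟩ := exists_lexLtAt_SN hk r hag' hlt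
    rw [distExp_comm, distExp_eq_of_lt hag' hlt] at hdN
    exact ⟨_, d, hdN, fun s hs => (hagd s hs).symm, hd.ne', by rw [Nat.mul_succ]; omega, hbound⟩
  · obtain ⟨d, ⟨hagd, hd, hdk⟩, hpot, hbound⟩ := exists_lexLtAt_SN hk r hag hlt
    rw [distExp_eq_of_lt hag hlt] at hdN
    exact ⟨_, d, hdN, hagd, hd.ne, by rw [Nat.mul_succ]; omega, hbound⟩

end Metric

section Topology

variable {k : ℕ}

theorem ball_mem_nhds (m : NN) {ε : ℝ} (hε : 0 < ε) : {p | dN p m < ε} ∈ 𝓝 m :=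
  IsOpen.mem_nhds (TopologicalSpace.GenerateOpen.basic _ ⟨m, ε, rfl⟩) (by simpa [dN_self])

theorem eventually_SN_agree (hk : 2 ≤ k) (m : NN) (J : ℕ) :
    ∀ᶠ p in 𝓝 m, ∀ s < J, SN k p s = SN k m s := by
  filter_upwards [ball_mem_nhds m (pow_pos (by norm_num : (0 : ℝ) < 2⁻¹) ((k - 1) * J))]
    with p hp s hs
  rcases eq_or_ne p m with rfl | hpm
  · rfl
  obtain ⟨X, d, hX, hagd, -, hpot, -⟩ := exists_dN_eq_SN_firstDiff hk hpm
  rw [hX, pow_lt_pow_iff_right_of_lt_one₀ (by norm_num) (by norm_num)] at hp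
  have := Nat.lt_of_mul_lt_mul_left (hp.trans hpot)
  exact hagd s (by omega)

theorem exists_dN_lt_of_SN_agree (hk : 2 ≤ k) (m : NN) {ε : ℝ} (hε : 0 < ε) :
    ∃ J, ∀ p, (∀ s < J, SN k p s = SN k m s) → dN p m < ε := by
  obtain ⟨B, hB⟩ := exists_pow_lt_of_lt_one hε (by norm_num : (2⁻¹ : ℝ) < 1)
  refine ⟨2 ^ B, fun p hp => ?_⟩
  rcases eq_or_ne p m with rfl | hpm
  · rwa [dN_self]
  obtain ⟨X, d, hX, -, hd, -, hbound⟩ := exists_dN_eq_SN_firstDiff hk hpm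
  have hBX : B ≤ X := by
    by_contra! hXB
    exact hd (hp d (hbound.trans (Nat.pow_le_pow_right two_pos hXB)))
  rw [hX]
  exact (pow_le_pow_of_le_one (by norm_num) (by norm_num) hBX).trans_lt hB

theorem isEmbedding_SN (hk : 2 ≤ k) : IsEmbedding (SN k) := by
  refine ⟨isInducing_iff_nhds.2 fun m => le_antisymm ?_ ?_, fun p q h => ?_⟩
  · rw [← tendsto_iff_comap]
    refine tendsto_pi_nhds.2 fun s => ?_
    rw [nhds_discrete ℕ, tendsto_pure]
    filter_upwards [eventually_SN_agree hk m (s + 1)] with p hp using hp s s.lt_succ_self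
  · rw [TopologicalSpace.nhds_generateFrom]
    refine le_iInf₂ fun B ⟨hmB, m₀, ε, hB⟩ => ?_
    subst hB
    obtain ⟨J, hJ⟩ := exists_dN_lt_of_SN_agree hk m ((dN_nonneg m m₀).trans_lt hmB)
    exact le_principal_iff.2 (mem_comap.2 ⟨_, eventually_agree_nhds (SN k m) J,
      fun p hp => (dN_le_max p m m₀).trans_lt (max_lt (hJ p hp) hmB)⟩)
  · by_contra hpq
    obtain ⟨-, d, -, -, hd, -⟩ := exists_dN_eq_SN_firstDiff hk hpq
    exact hd (congrFun h d)

end Topology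

/-- `S : N → Σ` is strictly order-preserving and continuous, and is a
homeomorphism onto its image. -/
theorem stmt2 (k : ℕ) (hk : 2 ≤ k) :
    (∀ m n : NN, nnLt m n → seqLt (SN k m) (SN k n)) ∧
    Continuous (SN k) ∧
    ∃ e : NN ≃ₜ Set.range (SN k), ∀ m, (e m : Seq) = SN k m := by
  refine ⟨fun m n ⟨r, hag, hlt⟩ => ?_, (isEmbedding_SN hk).continuous,
    (isEmbedding_SN hk).toHomeomorph, fun m => rfl⟩
  obtain ⟨d, hd, -⟩ := exists_lexLtAt_SN hk r hag hlt
  exact hd.seqLt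

end BetaDF
end
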